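/- arXiv:1811.02256 — 5 statements merged into one kernel-verified Lean document; each statement's English description precedes it below -/
import Mathlib

section
/- Let A and B be Pickands dependence functions with A(t) ≥ B(t) for all t ∈ [0,1]. Then τ(A) ≤ τ(B). -/
open MeasureTheory

/-- A Pickands dependence function: a convex function on `[0,1]` with
`max (1 - t) t ≤ A t ≤ 1` for all `t ∈ [0,1]`. -/
def IsPickands (A : ℝ → ℝ) : Prop :=
  ConvexOn ℝ (Set.Icc (0 : ℝ) 1) A ∧
    ∀ t ∈ Set.Icc (0 : ℝ) 1, max (1 - t) t ≤ A t ∧ A t ≤ 1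

/-- The right-hand derivative `D⁺A` of `A` on `[0,1)`, extended constantly by `D⁺A 0`
to the left of `0` and by the value `1` on `[1,∞)` (the integrand of Kendall's tau
vanishes at the endpoints, so these conventions do not affect it). -/
noncomputable def pickandsD (A : ℝ → ℝ) (t : ℝ) : ℝ :=
  if t < 0 then derivWithin A (Set.Ioi (0 : ℝ)) 0
  else if t < 1 then derivWithin A (Set.Ioi t) t
  else 1

open scoped Classical in
/-- Kendall's tau of a Pickands dependence function `A`:
`τ(A) = ∫_{[0,1]} t (1 - t) / A t  d(D⁺A)(t)`, the integral being taken with respect to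
the Lebesgue–Stieltjes measure induced by the nondecreasing right-continuous
function `D⁺A`. (For a Pickands function `A`, `pickandsD A` is monotone, so the
junk value `0` of the `else` branch is never used.) -/
noncomputable def kendallTau (A : ℝ → ℝ) : ℝ :=
  if h : Monotone (pickandsD A) then
    ∫ t in Set.Icc (0 : ℝ) 1, t * (1 - t) / A t ∂h.stieltjesFunction.measure
  else 0

/-- Spearman's rho of a Pickands dependence function:
`ρ(A) = 12 ∫₀¹ 1 / (1 + A t)² dt - 3`. -/
noncomputable def spearmanRho (A : ℝ → ℝ) : ℝ :=
  12 * (∫ t in (0 : ℝ)..1, 1 / (1 + A t) ^ 2) - 3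

/-- `A` is affine on the interval `[p,q]`. -/
def AffineOnIcc (A : ℝ → ℝ) (p q : ℝ) : Prop :=
  ∃ a b : ℝ, ∀ t ∈ Set.Icc p q, A t = a * t + b

/-- The triangular Pickands dependence function `T_{x₁,y₁}`: affine on `[0,x₁]` and on
`[x₁,1]` with `T 0 = T 1 = 1` and `T x₁ = y₁`. -/
noncomputable def triangular (x₁ y₁ : ℝ) (t : ℝ) : ℝ :=
  if t ≤ x₁ then 1 + (y₁ - 1) * t / x₁
  else y₁ + (1 - y₁) * (t - x₁) / (1 - x₁)

/-- The functional `Δ(C,D) = ρ(C) - ρ(D) - (3τ(C)/(2+τ(C)) - 3τ(D)/(2+τ(D)))`. -/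
noncomputable def Delta (C D : ℝ → ℝ) : ℝ :=
  spearmanRho C - spearmanRho D -
    (3 * kendallTau C / (2 + kendallTau C) - 3 * kendallTau D / (2 + kendallTau D))


open Set

namespace PickandsAux

variable {A : ℝ → ℝ}

theorem apply_zero (hA : IsPickands A) : A 0 = 1 := by
  have h := hA.2 0 (by norm_num)
  have h1 : (1:ℝ) ≤ A 0 := le_trans (by norm_num [le_max_iff]) h.1
  linarith [h.2]

theorem apply_one (hA : IsPickands A) : A 1 = 1 := by
  have h := hA.2 1 (by norm_num)
  have h1 : (1:ℝ) ≤ A 1 := le_trans (by norm_num [le_max_iff]) h.1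
  linarith [h.2]

theorem le_one (hA : IsPickands A) {t : ℝ} (ht : t ∈ Icc (0:ℝ) 1) : A t ≤ 1 := (hA.2 t ht).2

theorem fst_le (hA : IsPickands A) {t : ℝ} (ht : t ∈ Icc (0:ℝ) 1) : 1 - t ≤ A t :=
  le_trans (le_max_left _ _) (hA.2 t ht).1

theorem snd_le (hA : IsPickands A) {t : ℝ} (ht : t ∈ Icc (0:ℝ) 1) : t ≤ A t :=
  le_trans (le_max_right _ _) (hA.2 t ht).1

theorem half_le (hA : IsPickands A) {t : ℝ} (ht : t ∈ Icc (0:ℝ) 1) : (1:ℝ)/2 ≤ A t := by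
  rcases le_or_gt t (1/2) with h | h
  · linarith [fst_le hA ht]
  · linarith [snd_le hA ht]

theorem pos (hA : IsPickands A) {t : ℝ} (ht : t ∈ Icc (0:ℝ) 1) : 0 < A t := by
  linarith [half_le hA ht]

/-- slope bounds : `-1 ≤ slope A x y ≤ 1` for `x < y` in `[0,1]`. -/
theorem slope_le_one (hA : IsPickands A) {x y : ℝ} (hx : x ∈ Icc (0:ℝ) 1)
    (hy : y ∈ Icc (0:ℝ) 1) (hxy : x < y) : slope A x y ≤ 1 := by
  have hx1 : x < 1 := lt_of_lt_of_le hxy hy.2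
  have h1 : slope A x y ≤ slope A x 1 := by
    rcases eq_or_lt_of_le hy.2 with h | h
    · subst h; exact le_rfl
    · exact hA.1.slope_mono hx ⟨hy, by simp [mem_singleton_iff]; exact ne_of_gt hxy⟩
        ⟨right_mem_Icc.2 zero_le_one, by simp [mem_singleton_iff]; exact (ne_of_lt hx1).symm⟩ h.le
  have h2 : slope A x 1 ≤ 1 := by
    rw [slope_def_field, apply_one hA, div_le_one (by linarith)]
    linarith [snd_le hA hx]
  linarith

theorem neg_one_le_slope (hA : IsPickands A) {x y : ℝ} (hx : x ∈ Icc (0:ℝ) 1)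
    (hy : y ∈ Icc (0:ℝ) 1) (hxy : x < y) : -1 ≤ slope A x y := by
  have hy0 : 0 < y := lt_of_le_of_lt hx.1 hxy
  have h1 : slope A 0 y ≤ slope A x y := by
    rcases eq_or_lt_of_le hx.1 with h | h
    · rw [← h]
    · have := hA.1.slope_mono hy ⟨left_mem_Icc.2 zero_le_one, by simp [mem_singleton_iff]; exact (ne_of_gt hy0).symm⟩
        ⟨hx, by simp [mem_singleton_iff]; exact (ne_of_gt hxy).symm⟩ h.le
      calc slope A 0 y = slope A y 0 := slope_comm _ _ _
        _ ≤ slope A y x := this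
        _ = slope A x y := slope_comm _ _ _
  have h2 : -1 ≤ slope A 0 y := by
    rw [slope_def_field, apply_zero hA, sub_zero, le_div_iff₀ hy0]
    linarith [fst_le hA hy]
  linarith

theorem lip (hA : IsPickands A) {x y : ℝ} (hx : x ∈ Icc (0:ℝ) 1)
    (hy : y ∈ Icc (0:ℝ) 1) (hxy : x < y) : -(y - x) ≤ A y - A x ∧ A y - A x ≤ y - x := by
  have h1 := slope_le_one hA hx hy hxy
  have h2 := neg_one_le_slope hA hx hy hxy
  rw [slope_def_field, div_le_one (by linarith)] at h1
  rw [slope_def_field, le_div_iff₀ (by linarith : (0:ℝ) < y - x)] at h2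
  constructor <;> linarith

theorem continuousOn (hA : IsPickands A) : ContinuousOn A (Icc (0:ℝ) 1) := by
  have hl : LipschitzOnWith 1 A (Icc (0:ℝ) 1) := by
    rw [lipschitzOnWith_iff_dist_le_mul]
    intro x hx y hy
    rw [Real.dist_eq, Real.dist_eq, NNReal.coe_one, one_mul]
    rcases lt_trichotomy x y with h | h | h
    · have := lip hA hx hy h
      rw [abs_sub_comm x y, abs_sub_comm (A x) (A y), abs_le, abs_of_pos (by linarith : (0:ℝ) < y - x)]
      constructor <;> linarith [this.1, this.2]
    · simp [h]
    · have := lip hA hy hx h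
      rw [abs_le, abs_of_pos (by linarith : (0:ℝ) < x - y)]
      constructor <;> linarith [this.1, this.2]
  exact hl.continuousOn

theorem slope_monoOn (hA : IsPickands A) {t : ℝ} (ht : t ∈ Icc (0:ℝ) 1) :
    MonotoneOn (slope A t) (Icc (0:ℝ) 1 \ {t}) := hA.1.slope_mono ht

theorem Ioo_subset_diff {t : ℝ} (ht : 0 ≤ t) : Ioo t 1 ⊆ Icc (0:ℝ) 1 \ {t} := by
  intro u hu
  exact ⟨⟨le_trans ht hu.1.le, hu.2.le⟩, by simp [mem_singleton_iff]; exact (ne_of_gt hu.1)⟩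

theorem bddBelow_slopes (hA : IsPickands A) {t : ℝ} (ht : t ∈ Ico (0:ℝ) 1) :
    BddBelow (slope A t '' Ioo t 1) := by
  refine ⟨-1, ?_⟩
  rintro _ ⟨v, hv, rfl⟩
  exact neg_one_le_slope hA ⟨ht.1, ht.2.le⟩ ⟨le_trans ht.1 hv.1.le, hv.2.le⟩ hv.1

theorem hasDeriv (hA : IsPickands A) {t : ℝ} (ht : t ∈ Ico (0:ℝ) 1) :
    HasDerivWithinAt A (sInf (slope A t '' Ioo t 1)) (Ioi t) t := by
  rw [hasDerivWithinAt_iff_tendsto_slope]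
  have hd : Ioi t \ {t} = Ioi t := diff_singleton_eq_self (by simp)
  rw [hd]
  exact MonotoneOn.tendsto_nhdsWithin_Ioo_right (nonempty_Ioo.2 ht.2)
    ((slope_monoOn hA ⟨ht.1, ht.2.le⟩).mono (Ioo_subset_diff ht.1)) (bddBelow_slopes hA ht)

theorem pickandsD_eq (hA : IsPickands A) {t : ℝ} (ht : t ∈ Ico (0:ℝ) 1) :
    pickandsD A t = sInf (slope A t '' Ioo t 1) := by
  unfold pickandsD
  rw [if_neg (not_lt.2 ht.1), if_pos ht.2]
  exact (hasDeriv hA ht).derivWithin (uniqueDiffWithinAt_Ioi t)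

theorem hasDeriv' (hA : IsPickands A) {t : ℝ} (ht : t ∈ Ico (0:ℝ) 1) :
    HasDerivWithinAt A (pickandsD A t) (Ioi t) t := by
  rw [pickandsD_eq hA ht]; exact hasDeriv hA ht

theorem pickandsD_neg {t : ℝ} (ht : t < 0) : pickandsD A t = pickandsD A 0 := by
  unfold pickandsD
  rw [if_pos ht, if_neg (lt_irrefl 0), if_pos one_pos]

theorem pickandsD_ge_one {t : ℝ} (ht : 1 ≤ t) : pickandsD A t = 1 := by
  unfold pickandsD
  rw [if_neg (not_lt.2 (le_trans zero_le_one ht)), if_neg (not_lt.2 ht)]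

theorem pD_le_slope (hA : IsPickands A) {t v : ℝ} (ht : t ∈ Ico (0:ℝ) 1) (hv : v ∈ Ioo t 1) :
    pickandsD A t ≤ slope A t v := by
  rw [pickandsD_eq hA ht]
  exact csInf_le (bddBelow_slopes hA ht) (mem_image_of_mem _ hv)

theorem slope_le_pD (hA : IsPickands A) {s t : ℝ} (hs : s ∈ Icc (0:ℝ) 1) (ht : t ∈ Ico (0:ℝ) 1)
    (hst : s < t) : slope A s t ≤ pickandsD A t := by
  rw [pickandsD_eq hA ht]
  refine le_csInf ((nonempty_Ioo.2 ht.2).image _) ?_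
  rintro _ ⟨v, hv, rfl⟩
  have h1 : slope A t s ≤ slope A t v :=
    slope_monoOn hA ⟨ht.1, ht.2.le⟩ ⟨hs, by simp [mem_singleton_iff]; exact ne_of_lt hst⟩
      (Ioo_subset_diff ht.1 hv) (hst.le.trans hv.1.le)
  rw [slope_comm] at h1; exact h1

theorem pD_le_one (hA : IsPickands A) (t : ℝ) : pickandsD A t ≤ 1 := by
  rcases lt_or_ge t 0 with h | h
  · rw [pickandsD_neg h]
    refine le_trans (pD_le_slope hA (by norm_num) (⟨one_half_pos, by norm_num⟩ : (1/2:ℝ) ∈ Ioo (0:ℝ) 1)) ?_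
    exact slope_le_one hA (by norm_num) (by norm_num) one_half_pos
  · rcases lt_or_ge t 1 with h1 | h1
    · obtain ⟨v, hv⟩ := nonempty_Ioo.2 h1
      exact le_trans (pD_le_slope hA ⟨h, h1⟩ hv)
        (slope_le_one hA ⟨h, h1.le⟩ ⟨le_trans h hv.1.le, hv.2.le⟩ hv.1)
    · rw [pickandsD_ge_one h1]

theorem neg_one_le_pD (hA : IsPickands A) (t : ℝ) : -1 ≤ pickandsD A t := by
  have key : ∀ s ∈ Ico (0:ℝ) 1, -1 ≤ pickandsD A s := by
    intro s hs
    rw [pickandsD_eq hA hs]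
    refine le_csInf ((nonempty_Ioo.2 hs.2).image _) ?_
    rintro _ ⟨v, hv, rfl⟩
    exact neg_one_le_slope hA ⟨hs.1, hs.2.le⟩ ⟨le_trans hs.1 hv.1.le, hv.2.le⟩ hv.1
  rcases lt_or_ge t 0 with h | h
  · rw [pickandsD_neg h]; exact key 0 (by norm_num)
  · rcases lt_or_ge t 1 with h1 | h1
    · exact key t ⟨h, h1⟩
    · rw [pickandsD_ge_one h1]; norm_num

theorem pickandsD_mono (hA : IsPickands A) : Monotone (pickandsD A) := by
  have key : ∀ s ∈ Ico (0:ℝ) 1, ∀ t ∈ Ico (0:ℝ) 1, s ≤ t → pickandsD A s ≤ pickandsD A t := by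
    intro s hs t ht hst
    rcases eq_or_lt_of_le hst with rfl | h
    · exact le_rfl
    · exact le_trans (pD_le_slope hA hs ⟨h, ht.2⟩) (slope_le_pD hA ⟨hs.1, hs.2.le⟩ ht h)
  intro s t hst
  rcases lt_or_ge t 0 with h | h
  · rw [pickandsD_neg h, pickandsD_neg (lt_of_le_of_lt hst h)]
  · rcases lt_or_ge t 1 with h1 | h1
    · rcases lt_or_ge s 0 with h2 | h2
      · rw [pickandsD_neg h2]; exact key 0 (by norm_num) t ⟨h, h1⟩ h
      · exact key s ⟨h2, lt_of_le_of_lt hst h1⟩ t ⟨h, h1⟩ hst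
    · rw [pickandsD_ge_one h1]; exact pD_le_one hA s

theorem tendsto_right (hA : IsPickands A) {t : ℝ} (ht : t ∈ Ico (0:ℝ) 1) :
    Filter.Tendsto (pickandsD A) (nhdsWithin t (Ioi t)) (nhds (pickandsD A t)) := by
  have hmono := pickandsD_mono hA
  have h := hmono.tendsto_nhdsGT t
  have heq : sInf (pickandsD A '' Ioi t) = pickandsD A t := by
    refine le_antisymm ?_ (le_csInf (((Set.nonempty_Ioi).image _)) ?_)
    swap
    · rintro _ ⟨v, hv, rfl⟩; exact hmono hv.le
    refine le_of_forall_pos_le_add fun ε hε => ?_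
    -- find v with slope A t v < pickandsD A t + ε/2
    have hsinf := pickandsD_eq hA ht
    have hlt : sInf (slope A t '' Ioo t 1) < pickandsD A t + ε/2 := by
      rw [← hsinf]; linarith
    obtain ⟨_, ⟨v, hv, rfl⟩, hvlt⟩ :=
      exists_lt_of_csInf_lt ((nonempty_Ioo.2 ht.2).image _) hlt
    set δ : ℝ := min ((v - t)/2) (ε*(v-t)/8) with hδdef
    have hvt : 0 < v - t := by linarith [hv.1]
    have hδpos : 0 < δ := lt_min (by linarith) (by positivity)
    have hδ1 : δ ≤ (v - t)/2 := min_le_left _ _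
    have hδ2 : δ ≤ ε*(v-t)/8 := min_le_right _ _
    set u : ℝ := t + δ with hudef
    have hu : u ∈ Ico (0:ℝ) 1 := ⟨by linarith [ht.1], by linarith [hv.2]⟩
    have huv : u < v := by simp only [hudef]; linarith
    have hstep : pickandsD A u ≤ slope A u v := pD_le_slope hA hu ⟨huv, hv.2⟩
    have hS : slope A u v ≤ pickandsD A t + ε := by
      have hSdef : slope A t v * (v - t) = A v - A t := by
        rw [slope_def_field]; field_simp
      have hS1 : slope A t v ≤ 1 :=
        slope_le_one hA ⟨ht.1, ht.2.le⟩ ⟨le_trans ht.1 hv.1.le, hv.2.le⟩ hv.1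
      have hlipv : A t - A u ≤ δ := by
        have := (lip hA ⟨ht.1, ht.2.le⟩ ⟨hu.1, hu.2.le⟩ (by simp [hudef]; linarith)).1
        simp only [hudef] at this ⊢; linarith
      rw [slope_def_field, div_le_iff₀ (by linarith : (0:ℝ) < v - u)]
      have hvu : v - u ≥ (v - t)/2 := by simp only [hudef]; linarith
      have hprod : (1 - slope A t v) * δ ≥ 0 := mul_nonneg (by linarith) hδpos.le
      have hprod2 : ε * (v - u - (v-t)/2) ≥ 0 := mul_nonneg hε.le (by linarith)
      nlinarith [hvlt, hSdef, hε, hvt]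
    calc sInf (pickandsD A '' Ioi t) ≤ pickandsD A u :=
          csInf_le (hmono.map_bddBelow bddBelow_Ioi) (mem_image_of_mem _ (by simp [hudef]; linarith))
      _ ≤ pickandsD A t + ε := le_trans hstep hS
  rwa [heq] at h

theorem tendsto_right_all (hA : IsPickands A) (t : ℝ) :
    Filter.Tendsto (pickandsD A) (nhdsWithin t (Ioi t)) (nhds (pickandsD A t)) := by
  rcases lt_or_ge t 0 with h | h
  · apply Filter.Tendsto.congr' _ (tendsto_const_nhds (α := ℝ) (f := nhdsWithin t (Ioi t)))
    · filter_upwards [Ioo_mem_nhdsGT_of_mem (⟨le_rfl, h⟩ : t ∈ Ico t 0)] with y hy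
      rw [pickandsD_neg hy.2, pickandsD_neg h]
  · rcases lt_or_ge t 1 with h1 | h1
    · exact tendsto_right hA ⟨h, h1⟩
    · apply Filter.Tendsto.congr' _ (tendsto_const_nhds (α := ℝ) (f := nhdsWithin t (Ioi t)))
      · filter_upwards [self_mem_nhdsWithin] with y hy
        rw [pickandsD_ge_one (le_trans h1 (le_of_lt hy)), pickandsD_ge_one h1]

theorem stieltjes_eq (hA : IsPickands A) (x : ℝ) :
    (pickandsD_mono hA).stieltjesFunction x = pickandsD A x := by
  rw [Monotone.stieltjesFunction_eq]
  exact rightLim_eq_of_tendsto (tendsto_right_all hA x)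

theorem ftc (hA : IsPickands A) {t : ℝ} (ht : t ∈ Icc (0:ℝ) 1) :
    A t = 1 + ∫ u in (0:ℝ)..t, pickandsD A u := by
  have hmono := pickandsD_mono hA
  have derivF : ∀ x ∈ Ico (0:ℝ) 1,
      HasDerivWithinAt (fun y => 1 + ∫ u in (0:ℝ)..y, pickandsD A u) (pickandsD A x) (Ici x) x := by
    intro x hx
    refine HasDerivWithinAt.const_add 1 ?_
    refine intervalIntegral.integral_hasDerivWithinAt_right (s := Ici x) (t := Ioi x)
      hmono.intervalIntegrable ⟨Set.univ, Filter.univ_mem, hmono.measurable.aestronglyMeasurable⟩ ?_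
    exact (tendsto_right_all hA x).mono_left (nhdsWithin_mono x (by intro y hy; exact hy))
  have derivA : ∀ x ∈ Ico (0:ℝ) 1, HasDerivWithinAt A (pickandsD A x) (Ici x) x :=
    fun x hx => (hasDeriv' hA hx).Ici_of_Ioi
  have contF : ContinuousOn (fun y => 1 + ∫ u in (0:ℝ)..y, pickandsD A u) (Icc (0:ℝ) 1) :=
    (continuous_const.add
      (intervalIntegral.continuous_primitive (fun a b => hmono.intervalIntegrable) 0)).continuousOn
  have := eq_of_has_deriv_right_eq derivA derivF (continuousOn hA) contF
    (by simp [apply_zero hA])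
  exact this t ht



open scoped ENNReal

theorem swap1 (μ : Measure ℝ) [SigmaFinite μ] {t : ℝ} :
    ∫⁻ s in Ioc (0:ℝ) t, ENNReal.ofReal s ∂μ = ∫⁻ u in Ioo (0:ℝ) t, μ (Ioc u t) ∂volume := by
  have h1 : ∫⁻ s in Ioc (0:ℝ) t, ENNReal.ofReal s ∂μ
      = ∫⁻ s in Ioc (0:ℝ) t, (∫⁻ u, (Ioo (0:ℝ) s).indicator (fun _ => 1) u ∂volume) ∂μ := by
    refine setLIntegral_congr_fun_ae measurableSet_Ioc (Filter.Eventually.of_forall fun s hs => ?_)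
    rw [lintegral_indicator measurableSet_Ioo, setLIntegral_one, Real.volume_Ioo, sub_zero]
  have hmeas : AEMeasurable
      (Function.uncurry fun s u => (Ioo (0:ℝ) s).indicator (fun _ => (1:ℝ≥0∞)) u)
      ((μ.restrict (Ioc 0 t)).prod volume) := by
    have : (Function.uncurry fun s u => (Ioo (0:ℝ) s).indicator (fun _ => (1:ℝ≥0∞)) u)
        = {p : ℝ × ℝ | 0 < p.2 ∧ p.2 < p.1}.indicator (fun _ => 1) := by
      funext p
      simp [Function.uncurry, Set.indicator, Set.mem_Ioo, Set.mem_setOf_eq]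
    rw [this]
    exact (measurable_const.indicator
      ((measurableSet_lt measurable_const measurable_snd).inter
        (measurableSet_lt measurable_snd measurable_fst))).aemeasurable
  rw [h1, lintegral_lintegral_swap hmeas]
  have h2 : ∀ u : ℝ, ∫⁻ s in Ioc (0:ℝ) t, (Ioo (0:ℝ) s).indicator (fun _ => (1:ℝ≥0∞)) u ∂μ
      = (Ioi (0:ℝ)).indicator (fun u => μ (Ioc u t)) u := by
    intro u
    by_cases hu : 0 < u
    · have hsw : ∀ s : ℝ, (Ioo (0:ℝ) s).indicator (fun _ => (1:ℝ≥0∞)) u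
          = (Ioi u).indicator (fun _ => (1:ℝ≥0∞)) s := by
        intro s
        by_cases hs : u < s
        · rw [Set.indicator_of_mem (Set.mem_Ioo.2 ⟨hu, hs⟩), Set.indicator_of_mem (Set.mem_Ioi.2 hs)]
        · rw [Set.indicator_of_notMem (fun hc => hs (Set.mem_Ioo.1 hc).2),
            Set.indicator_of_notMem (fun hc => hs (Set.mem_Ioi.1 hc))]
      simp_rw [hsw]
      rw [lintegral_indicator measurableSet_Ioi, setLIntegral_one,
        Measure.restrict_apply measurableSet_Ioi,
        Set.indicator_of_mem (Set.mem_Ioi.2 hu)]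
      congr 1
      ext s
      simp only [Set.mem_inter_iff, Set.mem_Ioi, Set.mem_Ioc]
      exact ⟨fun h => ⟨h.1, h.2.2⟩, fun h => ⟨h.1, lt_trans hu h.1, h.2⟩⟩
    · have hz : ∀ s : ℝ, (Ioo (0:ℝ) s).indicator (fun _ => (1:ℝ≥0∞)) u = 0 := fun s =>
        Set.indicator_of_notMem (fun hc => hu (Set.mem_Ioo.1 hc).1) _
      simp_rw [hz]
      rw [lintegral_zero, Set.indicator_of_notMem (by simpa using hu)]
  simp_rw [h2]
  rw [lintegral_indicator measurableSet_Ioi]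
  rw [← lintegral_indicator measurableSet_Ioi, ← lintegral_indicator measurableSet_Ioo]
  congr 1; funext u
  by_cases h : u ∈ Ioo (0:ℝ) t
  · rw [Set.indicator_of_mem h, Set.indicator_of_mem (Set.mem_Ioi.2 h.1)]
  · by_cases h' : u ∈ Ioi (0:ℝ)
    · rw [Set.indicator_of_mem h', Set.indicator_of_notMem h]
      have ht' : ¬ u < t := fun hc => h ⟨h', hc⟩
      rw [Set.Ioc_eq_empty ht', measure_empty]
    · rw [Set.indicator_of_notMem h', Set.indicator_of_notMem h]

theorem swap2 (μ : Measure ℝ) [SigmaFinite μ] {t : ℝ} :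
    ∫⁻ s in Ioo t (1:ℝ), ENNReal.ofReal (1 - s) ∂μ = ∫⁻ u in Ioo t (1:ℝ), μ (Ioc t u) ∂volume := by
  have h1 : ∫⁻ s in Ioo t (1:ℝ), ENNReal.ofReal (1 - s) ∂μ
      = ∫⁻ s in Ioo t (1:ℝ), (∫⁻ u, (Ico s (1:ℝ)).indicator (fun _ => 1) u ∂volume) ∂μ := by
    refine setLIntegral_congr_fun_ae measurableSet_Ioo (Filter.Eventually.of_forall fun s hs => ?_)
    rw [lintegral_indicator measurableSet_Ico, setLIntegral_one, Real.volume_Ico]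
  have hmeas : AEMeasurable
      (Function.uncurry fun s u => (Ico s (1:ℝ)).indicator (fun _ => (1:ℝ≥0∞)) u)
      ((μ.restrict (Ioo t 1)).prod volume) := by
    have : (Function.uncurry fun s u => (Ico s (1:ℝ)).indicator (fun _ => (1:ℝ≥0∞)) u)
        = {p : ℝ × ℝ | p.1 ≤ p.2 ∧ p.2 < 1}.indicator (fun _ => 1) := by
      funext p
      simp [Function.uncurry, Set.indicator, Set.mem_Ico, Set.mem_setOf_eq]
    rw [this]
    exact (measurable_const.indicator
      ((measurableSet_le measurable_fst measurable_snd).inter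
        (measurableSet_lt measurable_snd measurable_const))).aemeasurable
  rw [h1, lintegral_lintegral_swap hmeas]
  have h2 : ∀ u : ℝ, ∫⁻ s in Ioo t (1:ℝ), (Ico s (1:ℝ)).indicator (fun _ => (1:ℝ≥0∞)) u ∂μ
      = (Iio (1:ℝ)).indicator (fun u => μ (Ioc t u)) u := by
    intro u
    by_cases hu : u < 1
    · have hsw : ∀ s : ℝ, (Ico s (1:ℝ)).indicator (fun _ => (1:ℝ≥0∞)) u
          = (Iic u).indicator (fun _ => (1:ℝ≥0∞)) s := by
        intro s
        by_cases hs : s ≤ u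
        · rw [Set.indicator_of_mem (Set.mem_Ico.2 ⟨hs, hu⟩), Set.indicator_of_mem (Set.mem_Iic.2 hs)]
        · rw [Set.indicator_of_notMem (fun hc => hs (Set.mem_Ico.1 hc).1),
            Set.indicator_of_notMem (fun hc => hs (Set.mem_Iic.1 hc))]
      simp_rw [hsw]
      rw [lintegral_indicator measurableSet_Iic, setLIntegral_one,
        Measure.restrict_apply measurableSet_Iic,
        Set.indicator_of_mem (Set.mem_Iio.2 hu)]
      congr 1
      ext s
      simp only [Set.mem_inter_iff, Set.mem_Iic, Set.mem_Ioo, Set.mem_Ioc]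
      exact ⟨fun h => ⟨h.2.1, h.1⟩, fun h => ⟨h.2, h.1, lt_of_le_of_lt h.2 hu⟩⟩
    · have hz : ∀ s : ℝ, (Ico s (1:ℝ)).indicator (fun _ => (1:ℝ≥0∞)) u = 0 := fun s =>
        Set.indicator_of_notMem (fun hc => hu (Set.mem_Ico.1 hc).2) _
      simp_rw [hz]
      rw [lintegral_zero, Set.indicator_of_notMem (by simpa using hu)]
  simp_rw [h2]
  rw [lintegral_indicator measurableSet_Iio]
  rw [← lintegral_indicator measurableSet_Iio, ← lintegral_indicator measurableSet_Ioo]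
  congr 1; funext u
  by_cases h : u ∈ Ioo t (1:ℝ)
  · rw [Set.indicator_of_mem h, Set.indicator_of_mem (Set.mem_Iio.2 h.2)]
  · by_cases h' : u ∈ Iio (1:ℝ)
    · rw [Set.indicator_of_mem h', Set.indicator_of_notMem h]
      have ht' : ¬ t < u := fun hc => h ⟨hc, h'⟩
      rw [Set.Ioc_eq_empty ht', measure_empty]
    · rw [Set.indicator_of_notMem h', Set.indicator_of_notMem h]



theorem measure_Ioc_eq (hA : IsPickands A) (a b : ℝ) :
    ((pickandsD_mono hA).stieltjesFunction).measure (Ioc a b)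
      = ENNReal.ofReal (pickandsD A b - pickandsD A a) := by
  rw [StieltjesFunction.measure_Ioc, stieltjes_eq hA, stieltjes_eq hA]

theorem pD_integrableOn_Ioo (hA : IsPickands A) {a b : ℝ} (hab : a ≤ b) :
    IntegrableOn (pickandsD A) (Ioo a b) volume :=
  ((pickandsD_mono hA).intervalIntegrable (a := a) (b := b)).1.mono_set Ioo_subset_Ioc_self

theorem integral_pD (hA : IsPickands A) {t : ℝ} (ht : t ∈ Icc (0:ℝ) 1) :
    ∫ u in (0:ℝ)..t, pickandsD A u = A t - 1 := by
  have := ftc hA ht; linarith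

theorem integral_pD_right (hA : IsPickands A) {t : ℝ} (ht : t ∈ Icc (0:ℝ) 1) :
    ∫ u in t..(1:ℝ), pickandsD A u = 1 - A t := by
  have h0 : (∫ u in (0:ℝ)..t, pickandsD A u) + (∫ u in t..(1:ℝ), pickandsD A u)
      = ∫ u in (0:ℝ)..(1:ℝ), pickandsD A u :=
    intervalIntegral.integral_add_adjacent_intervals
      (pickandsD_mono hA).intervalIntegrable (pickandsD_mono hA).intervalIntegrable
  have h1 := integral_pD hA ht
  have h2 := integral_pD hA (right_mem_Icc.2 zero_le_one)
  rw [apply_one hA] at h2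
  linarith

theorem nonneg1 (hA : IsPickands A) {t : ℝ} (ht : t ∈ Icc (0:ℝ) 1) :
    0 ≤ t * pickandsD A t - (A t - 1) := by
  have hmono := pickandsD_mono hA
  have hle : ∫ u in (0:ℝ)..t, pickandsD A u ≤ ∫ u in (0:ℝ)..t, pickandsD A t :=
    intervalIntegral.integral_mono_on ht.1 hmono.intervalIntegrable intervalIntegrable_const
      (fun u hu => hmono hu.2)
  rw [integral_pD hA ht, intervalIntegral.integral_const, smul_eq_mul, sub_zero] at hle
  linarith

theorem nonneg2 (hA : IsPickands A) {t : ℝ} (ht : t ∈ Icc (0:ℝ) 1) :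
    0 ≤ (1 - A t) - (1 - t) * pickandsD A t := by
  have hmono := pickandsD_mono hA
  have hle : ∫ u in t..(1:ℝ), pickandsD A t ≤ ∫ u in t..(1:ℝ), pickandsD A u :=
    intervalIntegral.integral_mono_on ht.2 intervalIntegrable_const hmono.intervalIntegrable
      (fun u hu => hmono hu.1)
  rw [integral_pD_right hA ht, intervalIntegral.integral_const, smul_eq_mul] at hle
  linarith

theorem intG (hA : IsPickands A) {t : ℝ} (ht : t ∈ Icc (0:ℝ) 1) :
    ∫⁻ s in Ioo (0:ℝ) 1, ENNReal.ofReal (min t s - t*s)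
      ∂((pickandsD_mono hA).stieltjesFunction).measure = ENNReal.ofReal (1 - A t) := by
  set μ := ((pickandsD_mono hA).stieltjesFunction).measure with hμ
  set g := pickandsD A with hg
  have hmono := pickandsD_mono hA
  rcases eq_or_lt_of_le ht.2 with h1 | h1
  · subst h1
    have e0 : ∫⁻ s in Ioo (0:ℝ) 1, ENNReal.ofReal (min (1:ℝ) s - 1*s) ∂μ
        = ∫⁻ s in Ioo (0:ℝ) 1, 0 ∂μ := by
      refine setLIntegral_congr_fun_ae measurableSet_Ioo (Filter.Eventually.of_forall fun s hs => ?_)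
      rw [min_eq_right hs.2.le, one_mul, sub_self, ENNReal.ofReal_zero]
    rw [e0, lintegral_zero, apply_one hA, sub_self, ENNReal.ofReal_zero]
  · have hsplit : Ioo (0:ℝ) 1 = Ioc 0 t ∪ Ioo t 1 := (Set.Ioc_union_Ioo_eq_Ioo ht.1 h1).symm
    have hdisj : Disjoint (Ioc (0:ℝ) t) (Ioo t 1) := by
      rw [Set.disjoint_left]; rintro s hs hs'; exact absurd hs'.1 (not_lt.2 hs.2)
    rw [hsplit, lintegral_union measurableSet_Ioo hdisj]
    have hP1 : ∫⁻ s in Ioc (0:ℝ) t, ENNReal.ofReal (min t s - t*s) ∂μ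
        = ENNReal.ofReal ((1-t) * (t * g t - (A t - 1))) := by
      have e1 : ∫⁻ s in Ioc (0:ℝ) t, ENNReal.ofReal (min t s - t*s) ∂μ
          = ∫⁻ s in Ioc (0:ℝ) t, ENNReal.ofReal (1-t) * ENNReal.ofReal s ∂μ := by
        refine setLIntegral_congr_fun_ae measurableSet_Ioc (Filter.Eventually.of_forall fun s hs => ?_)
        rw [min_eq_right hs.2, ← ENNReal.ofReal_mul (by linarith : (0:ℝ) ≤ 1 - t)]
        ring_nf
      rw [e1, lintegral_const_mul' _ _ ENNReal.ofReal_ne_top, swap1 μ]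
      have e2 : ∫⁻ u in Ioo (0:ℝ) t, μ (Ioc u t) ∂volume
          = ∫⁻ u in Ioo (0:ℝ) t, ENNReal.ofReal (g t - g u) ∂volume := by
        refine setLIntegral_congr_fun_ae measurableSet_Ioo (Filter.Eventually.of_forall fun u hu => ?_)
        exact measure_Ioc_eq hA u t
      rw [e2]
      have hgint : IntegrableOn g (Ioo 0 t) volume := pD_integrableOn_Ioo hA ht.1
      have hInt : IntegrableOn (fun u => g t - g u) (Ioo 0 t) volume := by
        refine Integrable.sub ?_ hgint
        exact (integrableOn_const_iff).2 (Or.inr (by rw [Real.volume_Ioo]; exact ENNReal.ofReal_lt_top)) 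
      rw [← MeasureTheory.ofReal_integral_eq_lintegral_ofReal hInt
        (((ae_restrict_mem measurableSet_Ioo).mono fun u hu => sub_nonneg.2 (hmono hu.2.le)))]
      rw [← ENNReal.ofReal_mul (by linarith : (0:ℝ) ≤ 1 - t)]
      congr 1
      have e3 : ∫ u in Ioo (0:ℝ) t, (g t - g u) = ∫ u in (0:ℝ)..t, (g t - g u) := by
        rw [intervalIntegral.integral_of_le ht.1, ← integral_Ioc_eq_integral_Ioo]
      rw [e3, intervalIntegral.integral_sub intervalIntegrable_const hmono.intervalIntegrable,
        intervalIntegral.integral_const, integral_pD hA ht, smul_eq_mul, sub_zero]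
    have hP2 : ∫⁻ s in Ioo t (1:ℝ), ENNReal.ofReal (min t s - t*s) ∂μ
        = ENNReal.ofReal (t * ((1 - A t) - (1-t) * g t)) := by
      have e1 : ∫⁻ s in Ioo t (1:ℝ), ENNReal.ofReal (min t s - t*s) ∂μ
          = ∫⁻ s in Ioo t (1:ℝ), ENNReal.ofReal t * ENNReal.ofReal (1-s) ∂μ := by
        refine setLIntegral_congr_fun_ae measurableSet_Ioo (Filter.Eventually.of_forall fun s hs => ?_)
        rw [min_eq_left hs.1.le, ← ENNReal.ofReal_mul ht.1]
        ring_nf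
      rw [e1, lintegral_const_mul' _ _ ENNReal.ofReal_ne_top, swap2 μ]
      have e2 : ∫⁻ u in Ioo t (1:ℝ), μ (Ioc t u) ∂volume
          = ∫⁻ u in Ioo t (1:ℝ), ENNReal.ofReal (g u - g t) ∂volume := by
        refine setLIntegral_congr_fun_ae measurableSet_Ioo (Filter.Eventually.of_forall fun u hu => ?_)
        exact measure_Ioc_eq hA t u
      rw [e2]
      have hgint : IntegrableOn g (Ioo t 1) volume := pD_integrableOn_Ioo hA h1.le
      have hInt : IntegrableOn (fun u => g u - g t) (Ioo t 1) volume := by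
        refine Integrable.sub hgint ?_
        exact (integrableOn_const_iff).2 (Or.inr (by rw [Real.volume_Ioo]; exact ENNReal.ofReal_lt_top))
      rw [← MeasureTheory.ofReal_integral_eq_lintegral_ofReal hInt
        (((ae_restrict_mem measurableSet_Ioo).mono fun u hu => sub_nonneg.2 (hmono hu.1.le)))]
      rw [← ENNReal.ofReal_mul ht.1]
      congr 1
      have e3 : ∫ u in Ioo t (1:ℝ), (g u - g t) = ∫ u in t..(1:ℝ), (g u - g t) := by
        rw [intervalIntegral.integral_of_le h1.le, ← integral_Ioc_eq_integral_Ioo]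
      rw [e3, intervalIntegral.integral_sub hmono.intervalIntegrable intervalIntegrable_const,
        intervalIntegral.integral_const, integral_pD_right hA ht, smul_eq_mul]
    rw [hP1, hP2, ← ENNReal.ofReal_add
      (mul_nonneg (by linarith : (0:ℝ) ≤ 1 - t) (nonneg1 hA ht))
      (mul_nonneg ht.1 (nonneg2 hA ht))]
    congr 1
    ring



theorem key_ineq (hB : IsPickands B) {x y a b : ℝ} (hx : x ∈ Icc (0:ℝ) 1) (hy : y ∈ Icc (0:ℝ) 1)
    (hxy : x < y) (ha : 0 ≤ a) (hb : 0 ≤ b) (hab : a + b = 1) :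
    a * (x*(1-x)/B x) + b * (y*(1-y)/B y)
      ≤ (a*x+b*y)*(1-(a*x+b*y))/B (a*x+b*y) := by
  obtain rfl : b = 1 - a := by linarith
  have ha1 : a ≤ 1 := by linarith
  set u := B x with hu'
  set v := B y with hv'
  set m := a*x + (1-a)*y with hm'
  have hu : 0 < u := pos hB hx
  have hv : 0 < v := pos hB hy
  have hm : m ∈ Icc (0:ℝ) 1 := by
    constructor
    · have := mul_nonneg ha hx.1; have := mul_nonneg (by linarith : (0:ℝ) ≤ 1-a) hy.1; simp only [hm']; linarith
    · have h1 : a*x ≤ a*1 := mul_le_mul_of_nonneg_left hx.2 ha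
      have h2 : (1-a)*y ≤ (1-a)*1 := mul_le_mul_of_nonneg_left hy.2 (by linarith)
      simp only [hm']; linarith
  have hBm : B m ≤ a*u + (1-a)*v := by
    have := hB.1.2 hx hy ha (by linarith : (0:ℝ) ≤ 1-a) (by linarith)
    simpa [smul_eq_mul] using this
  have hw : 0 < a*u + (1-a)*v := by
    have h1 : a*(1/2) ≤ a*u := mul_le_mul_of_nonneg_left (half_le hB hx) ha
    have h2 : (1-a)*(1/2) ≤ (1-a)*v := mul_le_mul_of_nonneg_left (half_le hB hy) (by linarith)
    linarith
  have hmnn : 0 ≤ m*(1-m) := mul_nonneg hm.1 (by linarith [hm.2])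
  have hBmpos : 0 < B m := pos hB hm
  have hc1 : 0 ≤ y*u - x*v := by
    have hlip := (lip hB hx hy hxy).2
    have hxu : x ≤ u := snd_le hB hx
    nlinarith [mul_nonneg (sub_nonneg.2 hxu) (sub_pos.2 hxy).le,
      mul_le_mul_of_nonneg_left hlip hx.1]
  have hc2 : 0 ≤ v*(1-x) - u*(1-y) := by
    have hlip := (lip hB hx hy hxy).1
    have h1y : 1 - y ≤ v := fst_le hB hy
    nlinarith [mul_nonneg (sub_nonneg.2 h1y) (sub_pos.2 hxy).le,
      mul_le_mul_of_nonneg_left hlip (by linarith [hy.2] : (0:ℝ) ≤ 1 - y)]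
  have step1 : m*(1-m)/(a*u + (1-a)*v) ≤ m*(1-m)/B m := by gcongr
  have step2 : a * (x*(1-x)/u) + (1-a) * (y*(1-y)/v) ≤ m*(1-m)/(a*u + (1-a)*v) := by
    have heq : a * (x*(1-x)/u) + (1-a) * (y*(1-y)/v)
        = (a*(x*(1-x))*v + (1-a)*(y*(1-y))*u)/(u*v) := by
      field_simp
    rw [heq, div_le_div_iff₀ (by positivity) hw, hm']
    nlinarith [mul_nonneg (mul_nonneg (mul_nonneg ha (by linarith : (0:ℝ) ≤ 1-a)) hc1) hc2]
  exact le_trans step2 step1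

theorem pickands_one_sub (hB : IsPickands B) :
    IsPickands (fun t => 1 - t*(1-t)/B t) := by
  constructor
  · refine ⟨convex_Icc 0 1, ?_⟩
    intro x hx y hy a b ha hb hab
    simp only [smul_eq_mul]
    rcases lt_trichotomy x y with h | h | h
    · have := key_ineq hB hx hy h ha hb hab
      nlinarith [this]
    · subst h
      have hxx : a*x + b*x = x := by rw [← add_mul, hab, one_mul]
      rw [hxx]
      have hcomb : a*(1 - x*(1-x)/B x) + b*(1 - x*(1-x)/B x) = 1 - x*(1-x)/B x := by
        rw [← add_mul, hab, one_mul]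
      linarith
    · have key := key_ineq hB hy hx h hb ha (by linarith)
      have hcomm : b*y + a*x = a*x + b*y := by ring
      rw [hcomm] at key
      nlinarith [key]
  · intro t ht
    have hBpos := pos hB ht
    have hd1 : t*(1-t)/B t ≤ t := by
      rw [div_le_iff₀ hBpos]
      have := mul_le_mul_of_nonneg_left (fst_le hB ht) ht.1
      linarith
    have hd2 : t*(1-t)/B t ≤ 1 - t := by
      rw [div_le_iff₀ hBpos]
      have := mul_le_mul_of_nonneg_left (snd_le hB ht) (by linarith [ht.2] : (0:ℝ) ≤ 1 - t)
      nlinarith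
    have hd0 : 0 ≤ t*(1-t)/B t :=
      div_nonneg (mul_nonneg ht.1 (by linarith [ht.2])) hBpos.le
    exact ⟨max_le (by linarith) (by linarith), by linarith⟩



theorem lint_Icc_eq_Ioo (ν : Measure ℝ) {s : ℝ} (hs : s ∈ Icc (0:ℝ) 1) :
    ∫⁻ t in Icc (0:ℝ) 1, ENNReal.ofReal (min s t - s*t) ∂ν
      = ∫⁻ t in Ioo (0:ℝ) 1, ENNReal.ofReal (min s t - s*t) ∂ν := by
  have hset : Icc (0:ℝ) 1 = ({0, 1} : Set ℝ) ∪ Ioo 0 1 := by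
    ext z
    simp only [mem_Icc, mem_union, mem_insert_iff, mem_singleton_iff, mem_Ioo]
    constructor
    · rintro ⟨h0, h1⟩
      rcases eq_or_lt_of_le h0 with h | h
      · exact Or.inl (Or.inl h.symm)
      · rcases eq_or_lt_of_le h1 with h' | h'
        · exact Or.inl (Or.inr h')
        · exact Or.inr ⟨h, h'⟩
    · rintro ((rfl | rfl) | ⟨h0, h1⟩) <;> constructor <;> norm_num <;> linarith
  have hdisj : Disjoint ({0, 1} : Set ℝ) (Ioo 0 1) := by
    rw [Set.disjoint_left]
    rintro z (rfl | rfl) hz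
    · exact lt_irrefl 0 hz.1
    · exact lt_irrefl 1 hz.2
  rw [hset, lintegral_union measurableSet_Ioo hdisj]
  have hz : ∫⁻ t in ({0, 1} : Set ℝ), ENNReal.ofReal (min s t - s*t) ∂ν = 0 := by
    have hfz : ∀ t ∈ ({0, 1} : Set ℝ), ENNReal.ofReal (min s t - s*t) = 0 := by
      rintro t (rfl | rfl)
      · simp [min_eq_right hs.1]
      · simp [min_eq_left hs.2]
    rw [setLIntegral_congr_fun_ae ((measurableSet_singleton (1:ℝ)).insert 0)
      (Filter.Eventually.of_forall hfz), lintegral_zero]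
  rw [hz, zero_add]

theorem double {F W : ℝ → ℝ} (hF : IsPickands F) (hW : IsPickands W) :
    ∫⁻ t in Icc (0:ℝ) 1, ENNReal.ofReal (1 - W t)
        ∂((pickandsD_mono hF).stieltjesFunction).measure
      = ∫⁻ s in Ioo (0:ℝ) 1, ENNReal.ofReal (1 - F s)
        ∂((pickandsD_mono hW).stieltjesFunction).measure := by
  set μF := ((pickandsD_mono hF).stieltjesFunction).measure with hμF
  set μW := ((pickandsD_mono hW).stieltjesFunction).measure with hμW
  have h1 : ∀ t ∈ Icc (0:ℝ) 1, ENNReal.ofReal (1 - W t)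
      = ∫⁻ s in Ioo (0:ℝ) 1, ENNReal.ofReal (min t s - t*s) ∂μW :=
    fun t ht => (intG hW ht).symm
  rw [setLIntegral_congr_fun_ae measurableSet_Icc (Filter.Eventually.of_forall h1)]
  have hcont : Continuous fun p : ℝ × ℝ => ENNReal.ofReal (min p.1 p.2 - p.1*p.2) :=
    ENNReal.continuous_ofReal.comp
      ((continuous_fst.min continuous_snd).sub (continuous_fst.mul continuous_snd))
  have hmeas : AEMeasurable
      (Function.uncurry fun t s => ENNReal.ofReal (min t s - t*s))
      ((μF.restrict (Icc 0 1)).prod (μW.restrict (Ioo 0 1))) :=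
    hcont.measurable.aemeasurable
  rw [lintegral_lintegral_swap hmeas]
  refine setLIntegral_congr_fun_ae measurableSet_Ioo (Filter.Eventually.of_forall fun s hs => ?_)
  have hsym : ∀ t : ℝ, ENNReal.ofReal (min t s - t*s) = ENNReal.ofReal (min s t - s*t) := by
    intro t; rw [min_comm, mul_comm]
  simp_rw [hsym]
  rw [lint_Icc_eq_Ioo μF ⟨hs.1.le, hs.2.le⟩]
  exact intG hF ⟨hs.1.le, hs.2.le⟩

theorem measure_Icc_ne_top (hA : IsPickands A) :
    ((pickandsD_mono hA).stieltjesFunction).measure (Icc (0:ℝ) 1) ≠ ⊤ := by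
  have hsub : Icc (0:ℝ) 1 ⊆ Ioc (-1:ℝ) 1 := fun z hz => ⟨lt_of_lt_of_le (by norm_num) hz.1, hz.2⟩
  refine ne_top_of_le_ne_top ?_ (measure_mono hsub)
  rw [measure_Ioc_eq hA]
  exact ENNReal.ofReal_ne_top

end PickandsAux


/-- if `A ≥ B` on `[0,1]`, then `τ(A) ≤ τ(B)`. -/
theorem kendallTau_anti (A B : ℝ → ℝ)
    (hA : IsPickands A) (hB : IsPickands B)
    (hge : ∀ t ∈ Set.Icc (0 : ℝ) 1, B t ≤ A t) :
    kendallTau A ≤ kendallTau B := by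
  classical
  have hmA := PickandsAux.pickandsD_mono hA
  have hmB := PickandsAux.pickandsD_mono hB
  have hconv : ∀ (F : ℝ → ℝ) (hF : IsPickands F),
      (∫ t in Set.Icc (0:ℝ) 1, t * (1 - t) / F t
          ∂(PickandsAux.pickandsD_mono hF).stieltjesFunction.measure)
        = (∫⁻ t in Set.Icc (0:ℝ) 1, ENNReal.ofReal (t * (1 - t) / F t)
          ∂(PickandsAux.pickandsD_mono hF).stieltjesFunction.measure).toReal := by
    intro F hF
    refine integral_eq_lintegral_of_nonneg_ae ?_ ?_
    · filter_upwards [ae_restrict_mem measurableSet_Icc] with t ht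
      exact div_nonneg (mul_nonneg ht.1 (by linarith [ht.2])) (PickandsAux.pos hF ht).le
    · refine ContinuousOn.aestronglyMeasurable ?_ measurableSet_Icc
      refine ContinuousOn.div ?_ (PickandsAux.continuousOn hF)
        (fun t ht => (PickandsAux.pos hF ht).ne')
      exact (continuous_id.mul (continuous_const.sub continuous_id)).continuousOn
  rw [kendallTau, kendallTau, dif_pos hmA, dif_pos hmB, hconv A hA, hconv B hB]
  set μA := (PickandsAux.pickandsD_mono hA).stieltjesFunction.measure with hμA
  set μB := (PickandsAux.pickandsD_mono hB).stieltjesFunction.measure with hμB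
  set C : ℝ → ℝ := fun t => 1 - t*(1-t)/B t with hCdef
  have hC : IsPickands C := PickandsAux.pickands_one_sub hB
  set μC := (PickandsAux.pickandsD_mono hC).stieltjesFunction.measure with hμC
  have hBC : ∀ (ν : Measure ℝ),
      ∫⁻ t in Set.Icc (0:ℝ) 1, ENNReal.ofReal (t * (1 - t) / B t) ∂ν
        = ∫⁻ t in Set.Icc (0:ℝ) 1, ENNReal.ofReal (1 - C t) ∂ν := by
    intro ν
    refine setLIntegral_congr_fun_ae measurableSet_Icc (Filter.Eventually.of_forall fun t ht => ?_)
    simp only [hCdef]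
    congr 1
    ring
  have step1 : ∫⁻ t in Set.Icc (0:ℝ) 1, ENNReal.ofReal (t * (1 - t) / A t) ∂μA
      ≤ ∫⁻ t in Set.Icc (0:ℝ) 1, ENNReal.ofReal (t * (1 - t) / B t) ∂μA := by
    refine lintegral_mono_ae ?_
    filter_upwards [ae_restrict_mem measurableSet_Icc] with t ht
    refine ENNReal.ofReal_le_ofReal ?_
    have hnum : 0 ≤ t * (1 - t) := mul_nonneg ht.1 (by linarith [ht.2])
    exact div_le_div_of_nonneg_left hnum (PickandsAux.pos hB ht) (hge t ht)
  have step3 : ∫⁻ t in Set.Icc (0:ℝ) 1, ENNReal.ofReal (1 - C t) ∂μA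
      = ∫⁻ s in Set.Ioo (0:ℝ) 1, ENNReal.ofReal (1 - A s) ∂μC := PickandsAux.double hA hC
  have step4 : ∫⁻ s in Set.Ioo (0:ℝ) 1, ENNReal.ofReal (1 - A s) ∂μC
      ≤ ∫⁻ s in Set.Ioo (0:ℝ) 1, ENNReal.ofReal (1 - B s) ∂μC := by
    refine lintegral_mono_ae ?_
    filter_upwards [ae_restrict_mem measurableSet_Ioo] with s hs
    exact ENNReal.ofReal_le_ofReal (by linarith [hge s ⟨hs.1.le, hs.2.le⟩])
  have step5 : ∫⁻ s in Set.Ioo (0:ℝ) 1, ENNReal.ofReal (1 - B s) ∂μC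
      = ∫⁻ t in Set.Icc (0:ℝ) 1, ENNReal.ofReal (1 - C t) ∂μB :=
    (PickandsAux.double hB hC).symm
  have hfin : ∫⁻ t in Set.Icc (0:ℝ) 1, ENNReal.ofReal (t * (1 - t) / B t) ∂μB ≠ ⊤ := by
    refine ne_top_of_le_ne_top (PickandsAux.measure_Icc_ne_top hB) ?_
    calc ∫⁻ t in Set.Icc (0:ℝ) 1, ENNReal.ofReal (t * (1 - t) / B t) ∂μB
        ≤ ∫⁻ _ in Set.Icc (0:ℝ) 1, 1 ∂μB := by
          refine lintegral_mono_ae ?_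
          filter_upwards [ae_restrict_mem measurableSet_Icc] with t ht
          rw [← ENNReal.ofReal_one]
          refine ENNReal.ofReal_le_ofReal ?_
          rw [div_le_one (PickandsAux.pos hB ht)]
          nlinarith [PickandsAux.half_le hB ht, sq_nonneg (t - 1/2)]
      _ = μB (Set.Icc (0:ℝ) 1) := setLIntegral_one _
  refine ENNReal.toReal_mono hfin ?_
  calc ∫⁻ t in Set.Icc (0:ℝ) 1, ENNReal.ofReal (t * (1 - t) / A t) ∂μA
      ≤ ∫⁻ t in Set.Icc (0:ℝ) 1, ENNReal.ofReal (t * (1 - t) / B t) ∂μA := step1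
    _ = ∫⁻ t in Set.Icc (0:ℝ) 1, ENNReal.ofReal (1 - C t) ∂μA := hBC μA
    _ = ∫⁻ s in Set.Ioo (0:ℝ) 1, ENNReal.ofReal (1 - A s) ∂μC := step3
    _ ≤ ∫⁻ s in Set.Ioo (0:ℝ) 1, ENNReal.ofReal (1 - B s) ∂μC := step4
    _ = ∫⁻ t in Set.Icc (0:ℝ) 1, ENNReal.ofReal (1 - C t) ∂μB := step5
    _ = ∫⁻ t in Set.Icc (0:ℝ) 1, ENNReal.ofReal (t * (1 - t) / B t) ∂μB := (hBC μB).symm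
end

section
/- For every Pickands dependence function A the value τ(A) lies in [0,1]; moreover, τ(A) = 0 if and only if A is identically equal to 1, and τ(A) = 1 if and only if A(t) = max{t, 1−t} for all t ∈ [0,1]. -/
open MeasureTheory

section PickandsProof
open Set Function Filter Topology

namespace PickAux

variable {A : ℝ → ℝ} {t x y : ℝ}



lemma A_lb (hA : IsPickands A) {t : ℝ} (ht : t ∈ Icc (0:ℝ) 1) : max (1 - t) t ≤ A t :=
  (hA.2 t ht).1

lemma A_ub (hA : IsPickands A) {t : ℝ} (ht : t ∈ Icc (0:ℝ) 1) : A t ≤ 1 :=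
  (hA.2 t ht).2

lemma A_zero (hA : IsPickands A) : A 0 = 1 := by
  have h1 := A_lb hA (t := 0) (by norm_num)
  have h2 := A_ub hA (t := 0) (by norm_num)
  simp only [sub_zero] at h1
  have : max (1:ℝ) 0 = 1 := by norm_num
  rw [this] at h1; linarith

lemma A_one (hA : IsPickands A) : A 1 = 1 := by
  have h1 := A_lb hA (t := 1) (by norm_num)
  have h2 := A_ub hA (t := 1) (by norm_num)
  norm_num at h1; linarith

lemma A_pos (hA : IsPickands A) {t : ℝ} (ht : t ∈ Icc (0:ℝ) 1) : 0 < A t := by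
  have h1 := A_lb hA ht
  have h2 : (1 - t) ≤ max (1-t) t := le_max_left _ _
  have h3 : t ≤ max (1-t) t := le_max_right _ _
  rcases le_total t (1/2) with h | h
  · linarith
  · linarith

lemma A_half (hA : IsPickands A) : (1:ℝ)/2 ≤ A (1/2) := by
  have h1 := A_lb hA (t := 1/2) (by norm_num)
  norm_num at h1; linarith

lemma mem_Icc_of_Ioo {s t : ℝ} (ht : t ∈ Icc (0:ℝ) 1) (hs : s ∈ Ioo t 1) : s ∈ Icc (0:ℝ) 1 :=
  ⟨le_trans ht.1 hs.1.le, hs.2.le⟩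

/-- slopes are bounded below by `-1`. -/
lemma slope_lb (hA : IsPickands A) {x y : ℝ} (hx : 0 ≤ x) (hxy : x < y) (hy : y ≤ 1) :
    -1 ≤ slope A x y := by
  have hxI : x ∈ Icc (0:ℝ) 1 := ⟨hx, le_trans hxy.le hy⟩
  have hyI : y ∈ Icc (0:ℝ) 1 := ⟨le_trans hx hxy.le, hy⟩
  have base : -1 ≤ slope A 0 y := by
    rw [slope_def_field]
    have hy0 : (0:ℝ) < y := lt_of_le_of_lt hx hxy
    rw [le_div_iff₀ (by linarith : (0:ℝ) < y - 0)]
    have h1 := A_lb hA hyI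
    have h2 : (1 - y) ≤ max (1-y) y := le_max_left _ _
    rw [A_zero hA]
    linarith
  rcases eq_or_lt_of_le hx with h0 | h0
  · exact h0 ▸ base
  · have hmono := (hA.1.slope_mono hyI)
    have h1 : (0:ℝ) ∈ Icc (0:ℝ) 1 \ {y} := ⟨by norm_num, by
      simp only [mem_singleton_iff]; intro h; rw [← h] at hxy; linarith⟩
    have h2 : x ∈ Icc (0:ℝ) 1 \ {y} := ⟨hxI, by
      simp only [mem_singleton_iff]; exact hxy.ne⟩
    have := hmono h1 h2 h0.le
    rw [slope_comm A y 0, slope_comm A y x] at this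
    linarith [base]

/-- slopes are bounded above by `1`. -/
lemma slope_ub (hA : IsPickands A) {x y : ℝ} (hx : 0 ≤ x) (hxy : x < y) (hy : y ≤ 1) :
    slope A x y ≤ 1 := by
  have hxI : x ∈ Icc (0:ℝ) 1 := ⟨hx, le_trans hxy.le hy⟩
  have hyI : y ∈ Icc (0:ℝ) 1 := ⟨le_trans hx hxy.le, hy⟩
  have base : slope A x 1 ≤ 1 := by
    rw [slope_def_field]
    have hx1 : x < 1 := lt_of_lt_of_le hxy hy
    rw [div_le_iff₀ (by linarith : (0:ℝ) < 1 - x)]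
    have h1 := A_lb hA hxI
    have h2 : x ≤ max (1-x) x := le_max_right _ _
    rw [A_one hA]
    linarith
  rcases eq_or_lt_of_le hy with h1 | h1
  · rw [h1]; exact base
  · have hmono := (hA.1.slope_mono hxI)
    have hy' : y ∈ Icc (0:ℝ) 1 \ {x} := ⟨hyI, by
      simp only [mem_singleton_iff]; exact hxy.ne'⟩
    have h1' : (1:ℝ) ∈ Icc (0:ℝ) 1 \ {x} := ⟨by norm_num, by
      simp only [mem_singleton_iff]; intro h; rw [← h] at hxy; linarith⟩
    have := hmono hy' h1' h1.le
    linarith [base]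



/-- the right derivative of `A` at `t`. -/
noncomputable def rder (A : ℝ → ℝ) (t : ℝ) : ℝ := sInf (slope A t '' Ioo t 1)


lemma slope_monoOn (hA : IsPickands A) (ht0 : 0 ≤ t) : MonotoneOn (slope A t) (Ioo t 1) := by
  intro a ha b hb hab
  have htI : t ∈ Icc (0:ℝ) 1 := ⟨ht0, by linarith [ha.1, ha.2]⟩
  have hmono := hA.1.slope_mono htI
  have ha' : a ∈ Icc (0:ℝ) 1 \ {t} := ⟨⟨by linarith [ha.1], ha.2.le⟩, by
    simp only [mem_singleton_iff]; exact ha.1.ne'⟩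
  have hb' : b ∈ Icc (0:ℝ) 1 \ {t} := ⟨⟨by linarith [hb.1], hb.2.le⟩, by
    simp only [mem_singleton_iff]; exact hb.1.ne'⟩
  exact hmono ha' hb' hab

lemma Ioo_nonempty' (ht1 : t < 1) : ((t + 1) / 2) ∈ Ioo t 1 := ⟨by linarith, by linarith⟩

lemma bddBelow_slopes (hA : IsPickands A) (ht0 : 0 ≤ t) :
    BddBelow (slope A t '' Ioo t 1) := by
  refine ⟨-1, fun b ⟨s, hs, hb⟩ => ?_⟩
  exact hb ▸ slope_lb hA ht0 hs.1 hs.2.le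

lemma hasRDeriv (hA : IsPickands A) (ht0 : 0 ≤ t) (ht1 : t < 1) :
    HasDerivWithinAt A (rder A t) (Ioi t) t := by
  rw [hasDerivWithinAt_iff_tendsto_slope' (notMem_Ioi_self)]
  have := MonotoneOn.tendsto_nhdsWithin_Ioo_right (x := t) (y := 1)
    ⟨_, Ioo_nonempty' ht1⟩ (slope_monoOn hA ht0) (bddBelow_slopes hA ht0)
  exact this

lemma rder_mem (hA : IsPickands A) (ht0 : 0 ≤ t) (ht1 : t < 1) :
    rder A t ∈ Icc (-1 : ℝ) 1 := by
  constructor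
  · refine le_csInf ⟨_, mem_image_of_mem _ (Ioo_nonempty' ht1)⟩ ?_
    rintro b ⟨s, hs, rfl⟩
    exact slope_lb hA ht0 hs.1 hs.2.le
  · refine csInf_le_of_le (bddBelow_slopes hA ht0) (mem_image_of_mem _ (Ioo_nonempty' ht1)) ?_
    exact slope_ub hA ht0 (Ioo_nonempty' ht1).1 (Ioo_nonempty' ht1).2.le

lemma pickandsD_eq (hA : IsPickands A) (ht0 : 0 ≤ t) (ht1 : t < 1) :
    pickandsD A t = rder A t := by
  unfold pickandsD
  rw [if_neg (not_lt.2 ht0), if_pos ht1]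
  exact (hasRDeriv hA ht0 ht1).derivWithin (uniqueDiffWithinAt_Ioi t)

lemma pickandsD_neg (hA : IsPickands A) (ht : t < 0) : pickandsD A t = rder A 0 := by
  unfold pickandsD
  rw [if_pos ht]
  exact (hasRDeriv hA le_rfl one_pos).derivWithin (uniqueDiffWithinAt_Ioi 0)

lemma pickandsD_ge (hA : IsPickands A) (ht : 1 ≤ t) : pickandsD A t = 1 := by
  unfold pickandsD
  rw [if_neg (not_lt.2 (le_trans zero_le_one ht)), if_neg (not_lt.2 ht)]

lemma rder_le_slope (hA : IsPickands A) (ht0 : 0 ≤ t) (hty : t < y) (hy : y ≤ 1) :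
    rder A t ≤ slope A t y := by
  rcases eq_or_lt_of_le hy with h | h
  · subst h
    have ht1 : t < 1 := hty
    have hm : ((t+1)/2) ∈ Ioo t 1 := Ioo_nonempty' ht1
    refine csInf_le_of_le (bddBelow_slopes hA ht0) (mem_image_of_mem _ hm) ?_
    have hmono := hA.1.slope_mono (⟨ht0, ht1.le⟩ : t ∈ Icc (0:ℝ) 1)
    have hm' : ((t+1)/2) ∈ Icc (0:ℝ) 1 \ {t} := ⟨⟨by linarith [hm.1], hm.2.le⟩, by
      simp only [mem_singleton_iff]; exact hm.1.ne'⟩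
    have h1' : (1:ℝ) ∈ Icc (0:ℝ) 1 \ {t} := ⟨by norm_num, by
      simp only [mem_singleton_iff]; intro h; rw [← h] at ht1; exact lt_irrefl _ ht1⟩
    exact hmono hm' h1' hm.2.le
  · exact csInf_le (bddBelow_slopes hA ht0) (mem_image_of_mem _ ⟨hty, h⟩)

lemma slope_le_rder (hA : IsPickands A) (hx0 : 0 ≤ x) (hxy : x < y) (hy1 : y < 1) :
    slope A x y ≤ rder A y := by
  have hy0 : 0 ≤ y := le_trans hx0 hxy.le
  refine le_csInf ⟨_, mem_image_of_mem _ (Ioo_nonempty' hy1)⟩ ?_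
  rintro b ⟨s, hs, rfl⟩
  have hyI : y ∈ Icc (0:ℝ) 1 := ⟨hy0, hy1.le⟩
  have hmono := hA.1.slope_mono hyI
  have hx' : x ∈ Icc (0:ℝ) 1 \ {y} := ⟨⟨hx0, le_trans hxy.le hy1.le⟩, by
    simp only [mem_singleton_iff]; exact hxy.ne⟩
  have hs' : s ∈ Icc (0:ℝ) 1 \ {y} := ⟨⟨le_trans hy0 hs.1.le, hs.2.le⟩, by
    simp only [mem_singleton_iff]; exact hs.1.ne'⟩
  have := hmono hx' hs' (le_trans hxy.le hs.1.le)
  rwa [slope_comm A y x] at this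

lemma rder_mono (hA : IsPickands A) (hx0 : 0 ≤ x) (hxy : x ≤ y) (hy1 : y < 1) :
    rder A x ≤ rder A y := by
  rcases eq_or_lt_of_le hxy with rfl | h
  · exact le_rfl
  · exact (rder_le_slope hA hx0 h hy1.le).trans (slope_le_rder hA hx0 h hy1)

lemma pickandsD_le_one (hA : IsPickands A) (t : ℝ) : pickandsD A t ≤ 1 := by
  rcases lt_or_ge t 0 with h | h
  · rw [pickandsD_neg hA h]; exact (rder_mem hA le_rfl one_pos).2
  rcases lt_or_ge t 1 with h1 | h1
  · rw [pickandsD_eq hA h h1]; exact (rder_mem hA h h1).2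
  · rw [pickandsD_ge hA h1]

lemma D_mono (hA : IsPickands A) : Monotone (pickandsD A) := by
  intro x y hxy
  rcases lt_or_ge y 0 with hy | hy
  · rw [pickandsD_neg hA hy, pickandsD_neg hA (lt_of_le_of_lt hxy hy)]
  rcases lt_or_ge y 1 with hy1 | hy1
  · rw [pickandsD_eq hA hy hy1]
    rcases lt_or_ge x 0 with hx | hx
    · rw [pickandsD_neg hA hx]; exact rder_mono hA le_rfl hy hy1
    · rw [pickandsD_eq hA hx (lt_of_le_of_lt hxy hy1)]; exact rder_mono hA hx hxy hy1
  · rw [pickandsD_ge hA hy1]; exact pickandsD_le_one hA x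

lemma neg_one_le_pickandsD (hA : IsPickands A) (t : ℝ) : -1 ≤ pickandsD A t := by
  rcases lt_or_ge t 0 with h | h
  · rw [pickandsD_neg hA h]; exact (rder_mem hA le_rfl one_pos).1
  rcases lt_or_ge t 1 with h1 | h1
  · rw [pickandsD_eq hA h h1]; exact (rder_mem hA h h1).1
  · rw [pickandsD_ge hA h1]; norm_num



lemma SF_le_one (hA : IsPickands A) (x : ℝ) : (D_mono hA).stieltjesFunction x ≤ 1 := by
  rw [Monotone.stieltjesFunction_eq]
  exact le_trans ((D_mono hA).rightLim_le (lt_add_one x)) (pickandsD_le_one hA _)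

lemma neg_one_le_SF (hA : IsPickands A) (x : ℝ) : -1 ≤ (D_mono hA).stieltjesFunction x := by
  rw [Monotone.stieltjesFunction_eq]
  exact le_trans (neg_one_le_pickandsD hA x) ((D_mono hA).le_rightLim le_rfl)

lemma measure_Ioo_le (hA : IsPickands A) :
    (D_mono hA).stieltjesFunction.measure (Ioo 0 1) ≤ ENNReal.ofReal 2 := by
  rw [StieltjesFunction.measure_Ioo]
  apply ENNReal.ofReal_le_ofReal
  have h1 : Function.leftLim (D_mono hA).stieltjesFunction 1 ≤ (D_mono hA).stieltjesFunction 1 :=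
    (D_mono hA).stieltjesFunction.mono.leftLim_le le_rfl
  have h2 := SF_le_one hA 1
  have h3 := neg_one_le_SF hA 0
  linarith

lemma measure_Ioo_lt_top (hA : IsPickands A) :
    (D_mono hA).stieltjesFunction.measure (Ioo 0 1) < ⊤ :=
  lt_of_le_of_lt (measure_Ioo_le hA) ENNReal.ofReal_lt_top

lemma contOn (hA : IsPickands A) : ContinuousOn (fun t => t * (1 - t) / A t) (Ioo (0:ℝ) 1) := by
  have hAcont : ContinuousOn A (Ioo (0:ℝ) 1) := by
    have := hA.1.continuousOn_interior
    rwa [interior_Icc] at this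
  exact ((continuous_id.mul (continuous_const.sub continuous_id)).continuousOn).div hAcont
    (fun t ht => (A_pos hA (Ioo_subset_Icc_self ht)).ne')

lemma tau_eq (hA : IsPickands A) :
    kendallTau A =
      ∫ t in Ioo (0:ℝ) 1, t * (1 - t) / A t ∂(D_mono hA).stieltjesFunction.measure := by
  unfold kendallTau
  rw [dif_pos (D_mono hA)]
  have h1 : EqOn (fun t => t * (1 - t) / A t)
      ((Ioo (0:ℝ) 1).indicator (fun t => t * (1 - t) / A t)) (Icc (0:ℝ) 1) := by
    intro t ht
    by_cases h : t ∈ Ioo (0:ℝ) 1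
    · rw [indicator_of_mem h]
    · rw [indicator_of_notMem h]
      have : t = 0 ∨ t = 1 := by
        rcases ht with ⟨h0, h1'⟩
        rcases eq_or_lt_of_le h0 with h' | h'
        · exact Or.inl h'.symm
        rcases eq_or_lt_of_le h1' with h'' | h''
        · exact Or.inr h''
        · exact absurd ⟨h', h''⟩ h
      rcases this with rfl | rfl <;> simp
  rw [setIntegral_congr_fun measurableSet_Icc h1, setIntegral_indicator measurableSet_Ioo,
    Set.inter_eq_self_of_subset_right Ioo_subset_Icc_self]

lemma A_lower_left (hA : IsPickands A) (ht : 0 < t) (ht2 : t ≤ 1/2) :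
    t + 2 * (A (1/2) - 1/2) * (1 - t) ≤ A t := by
  have ht1 : t < 1 := by linarith
  set a : ℝ := 1 / (2 * (1 - t)) with ha
  have h1t : (0:ℝ) < 1 - t := by linarith
  have ha0 : 0 ≤ a := by positivity
  have ha1 : a ≤ 1 := by rw [ha, div_le_one (by linarith)]; linarith
  have hb0 : (0:ℝ) ≤ 1 - a := by linarith
  have hab : a + (1 - a) = 1 := by ring
  have key := hA.1.2 ⟨ht.le, ht1.le⟩ (by norm_num : (1:ℝ) ∈ Icc (0:ℝ) 1) ha0 hb0 hab
  have hco : a • t + (1 - a) • (1:ℝ) = 1/2 := by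
    simp only [smul_eq_mul, ha]; field_simp; ring_nf
  rw [hco] at key
  simp only [smul_eq_mul, A_one hA, mul_one] at key
  -- key : A (1/2) ≤ a * A t + (1 - a)
  have key2 : A (1/2) * (2 * (1 - t)) ≤ A t + (2 * (1 - t) - 1) := by
    have := mul_le_mul_of_nonneg_right key (le_of_lt (by linarith : (0:ℝ) < 2 * (1 - t)))
    calc A (1/2) * (2 * (1 - t)) ≤ (a * A t + (1 - a)) * (2 * (1 - t)) := this
      _ = A t + (2 * (1 - t) - 1) := by rw [ha]; field_simp; try ring
  nlinarith [key2]

lemma A_lower_right (hA : IsPickands A) (ht : 1/2 ≤ t) (ht2 : t < 1) :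
    (1 - t) + 2 * (A (1/2) - 1/2) * t ≤ A t := by
  have ht0 : (0:ℝ) < t := by linarith
  set b : ℝ := 1 / (2 * t) with hb
  have hb0 : 0 ≤ b := by positivity
  have hb1 : b ≤ 1 := by rw [hb, div_le_one (by linarith)]; linarith
  have ha0 : (0:ℝ) ≤ 1 - b := by linarith
  have hab : (1 - b) + b = 1 := by ring
  have key := hA.1.2 (by norm_num : (0:ℝ) ∈ Icc (0:ℝ) 1) ⟨ht0.le, ht2.le⟩ ha0 hb0 hab
  have hco : (1 - b) • (0:ℝ) + b • t = 1/2 := by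
    simp only [smul_eq_mul, hb]; field_simp; ring_nf
  rw [hco] at key
  simp only [smul_eq_mul, A_zero hA, mul_zero, mul_one] at key
  -- key : A (1/2) ≤ (1 - b) * 1 + b * A t
  have key2 : A (1/2) * (2 * t) ≤ (2 * t - 1) + A t := by
    have := mul_le_mul_of_nonneg_right key (le_of_lt (by linarith : (0:ℝ) < 2 * t))
    calc A (1/2) * (2 * t) ≤ ((1 - b) * 1 + b * A t) * (2 * t) := by
          rw [mul_one]; exact this
      _ = (2 * t - 1) + A t := by rw [hb]; field_simp; try ring
  nlinarith [key2]

lemma f_le (hA : IsPickands A) (ht : t ∈ Ioo (0:ℝ) 1) :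
    t * (1 - t) / A t ≤ 1 / (2 * (1 + (A (1/2) - 1/2))) := by
  obtain ⟨δ, hδ⟩ : ∃ δ, A (1/2) - 1/2 = δ := ⟨_, rfl⟩
  have hδ0 : 0 ≤ δ := by have := A_half hA; rw [← hδ]; linarith
  have hApos := A_pos hA (Ioo_subset_Icc_self ht)
  have hden : (0:ℝ) < 2 * (1 + δ) := by linarith
  rw [hδ, div_le_div_iff₀ hApos hden, one_mul]
  have ht0 := ht.1
  have ht1 := ht.2
  rcases le_total t (1/2) with h | h
  · have h1 : 1 - t ≤ A t := le_trans (le_max_left _ _) (A_lb hA (Ioo_subset_Icc_self ht))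
    have h2 := A_lower_left hA ht0 h
    rw [hδ] at h2
    rcases le_total (2 * (1 + δ) * t) 1 with hc | hc
    · nlinarith
    · nlinarith [mul_nonneg ht0.le (by linarith : (0:ℝ) ≤ 2 * (1 + δ) * t - 1),
        mul_nonneg hδ0 (by linarith : (0:ℝ) ≤ 1 - 2 * t)]
  · have h1 : t ≤ A t := le_trans (le_max_right _ _) (A_lb hA (Ioo_subset_Icc_self ht))
    have h2 := A_lower_right hA h ht1
    rw [hδ] at h2
    rcases le_total (2 * (1 + δ) * (1 - t)) 1 with hc | hc
    · nlinarith
    · nlinarith [mul_nonneg (by linarith : (0:ℝ) ≤ 1 - t)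
        (by linarith : (0:ℝ) ≤ 2 * (1 + δ) * (1 - t) - 1),
        mul_nonneg hδ0 (by linarith : (0:ℝ) ≤ 2 * t - 1)]

lemma f_nonneg (hA : IsPickands A) (ht : t ∈ Ioo (0:ℝ) 1) : 0 ≤ t * (1 - t) / A t := by
  have h0 := A_pos hA (Ioo_subset_Icc_self ht)
  have h1 := ht.1; have h2 := ht.2
  exact div_nonneg (mul_nonneg h1.le (by linarith)) h0.le

lemma tau_nonneg (hA : IsPickands A) : 0 ≤ kendallTau A := by
  rw [tau_eq hA]
  exact setIntegral_nonneg measurableSet_Ioo (fun x hx => f_nonneg hA hx)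

lemma tau_le (hA : IsPickands A) : kendallTau A ≤ 1 / (1 + (A (1/2) - 1/2)) := by
  set δ : ℝ := A (1/2) - 1/2 with hδ
  have hδ0 : 0 ≤ δ := by have := A_half hA; simp only [hδ]; linarith
  rw [tau_eq hA]
  set μ := (D_mono hA).stieltjesFunction.measure with hμ
  have hmeasf : AEStronglyMeasurable (fun t => t * (1 - t) / A t) (μ.restrict (Ioo 0 1)) :=
    (contOn hA).aestronglyMeasurable measurableSet_Ioo
  have hnorm := norm_setIntegral_le_of_norm_le_const (C := 1 / (2 * (1 + δ)))
    (measure_Ioo_lt_top hA) (fun x hx => by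
      rw [Real.norm_eq_abs, abs_of_nonneg (f_nonneg hA hx)]
      exact f_le hA hx)
  have htoReal : (μ (Ioo 0 1)).toReal ≤ 2 :=
    ENNReal.toReal_le_of_le_ofReal (by norm_num) (measure_Ioo_le hA)
  calc ∫ t in Ioo (0:ℝ) 1, t * (1 - t) / A t ∂μ
      ≤ ‖∫ t in Ioo (0:ℝ) 1, t * (1 - t) / A t ∂μ‖ := le_abs_self _
    _ ≤ 1 / (2 * (1 + δ)) * (μ (Ioo 0 1)).toReal := hnorm
    _ ≤ 1 / (2 * (1 + δ)) * 2 := by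
        apply mul_le_mul_of_nonneg_left htoReal; positivity
    _ = 1 / (1 + δ) := by field_simp; try ring

lemma tau_le_one (hA : IsPickands A) : kendallTau A ≤ 1 := by
  have h := tau_le hA
  have hδ0 : 0 ≤ A (1/2) - 1/2 := by have := A_half hA; linarith
  have : 1 / (1 + (A (1/2) - 1/2)) ≤ 1 := by
    rw [div_le_one (by linarith)]; linarith
  linarith

lemma integrableOn (hA : IsPickands A) :
    IntegrableOn (fun t => t * (1 - t) / A t) (Ioo (0:ℝ) 1)
      (D_mono hA).stieltjesFunction.measure := by
  refine ⟨(contOn hA).aestronglyMeasurable measurableSet_Ioo, ?_⟩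
  apply HasFiniteIntegral.restrict_of_bounded (C := 1) (measure_Ioo_lt_top hA)
  rw [ae_restrict_iff' measurableSet_Ioo]
  filter_upwards with x
  intro hx
  rw [Real.norm_eq_abs, abs_of_nonneg (f_nonneg hA hx)]
  have h1 := f_le hA hx
  have hδ0 : 0 ≤ A (1/2) - 1/2 := by have := A_half hA; linarith
  have : 1 / (2 * (1 + (A (1/2) - 1/2))) ≤ 1 := by
    rw [div_le_one (by linarith)]; linarith
  linarith



/-! ### τ = 1 → A = max -/

lemma A_eq_max_of_half (hA : IsPickands A) (h : A (1/2) = 1/2) :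
    ∀ t ∈ Icc (0:ℝ) 1, A t = max t (1 - t) := by
  intro t ht
  rcases le_total t (1/2) with hle | hle
  · have hmax : max t (1 - t) = 1 - t := max_eq_right (by linarith)
    rw [hmax]
    refine le_antisymm ?_ (le_trans (le_max_left _ _) (A_lb hA ht))
    have key := hA.1.2 (by norm_num : (0:ℝ) ∈ Icc (0:ℝ) 1)
      (by norm_num : (1:ℝ)/2 ∈ Icc (0:ℝ) 1)
      (by linarith : (0:ℝ) ≤ 1 - 2*t) (by linarith [ht.1] : (0:ℝ) ≤ 2*t) (by ring)
    have hco : (1 - 2*t) • (0:ℝ) + (2*t) • ((1:ℝ)/2) = t := by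
      simp only [smul_eq_mul]; ring
    rw [hco] at key
    simp only [smul_eq_mul, A_zero hA, h] at key
    calc A t ≤ (1 - 2*t) * 1 + 2*t * (1/2) := key
      _ = 1 - t := by ring
  · have hmax : max t (1 - t) = t := max_eq_left (by linarith)
    rw [hmax]
    refine le_antisymm ?_ (le_trans (le_max_right _ _) (A_lb hA ht))
    have key := hA.1.2 (by norm_num : (1:ℝ)/2 ∈ Icc (0:ℝ) 1)
      (by norm_num : (1:ℝ) ∈ Icc (0:ℝ) 1)
      (by linarith [ht.2] : (0:ℝ) ≤ 2 - 2*t) (by linarith : (0:ℝ) ≤ 2*t - 1) (by ring)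
    have hco : (2 - 2*t) • ((1:ℝ)/2) + (2*t - 1) • (1:ℝ) = t := by
      simp only [smul_eq_mul]; ring
    rw [hco] at key
    simp only [smul_eq_mul, A_one hA, h] at key
    calc A t ≤ (2 - 2*t) * (1/2) + (2*t - 1) * 1 := key
      _ = t := by ring

lemma A_max_of_tau_one (hA : IsPickands A) (h : kendallTau A = 1) :
    ∀ t ∈ Icc (0:ℝ) 1, A t = max t (1 - t) := by
  apply A_eq_max_of_half hA
  by_contra hne
  have hgt : 1/2 < A (1/2) := lt_of_le_of_ne (A_half hA) (Ne.symm hne)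
  have := tau_le hA
  rw [h] at this
  have hlt : 1 / (1 + (A (1/2) - 1/2)) < 1 := by
    rw [div_lt_one (by linarith)]; linarith
  linarith

/-! ### τ = 0 → A ≡ 1 -/

lemma measure_Ioo_eq_zero_of_tau_zero (hA : IsPickands A) (h : kendallTau A = 0) :
    (D_mono hA).stieltjesFunction.measure (Ioo 0 1) = 0 := by
  set μ := (D_mono hA).stieltjesFunction.measure with hμ
  rw [tau_eq hA] at h
  have hnn : 0 ≤ᵐ[μ.restrict (Ioo (0:ℝ) 1)] (fun t => t * (1 - t) / A t) :=
    (ae_restrict_iff' measurableSet_Ioo).2 (ae_of_all _ (fun x hx => f_nonneg hA hx))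
  have h0 := (integral_eq_zero_iff_of_nonneg_ae hnn (integrableOn hA)).mp h
  have hnull : μ.restrict (Ioo (0:ℝ) 1) {x | ¬ (x * (1 - x) / A x = (0:ℝ→ℝ) x)} = 0 :=
    ae_iff.mp h0
  have hsub : Ioo (0:ℝ) 1 ⊆ {x | ¬ (x * (1 - x) / A x = (0:ℝ→ℝ) x)} := by
    intro x hx
    have hpos : 0 < x * (1 - x) / A x :=
      div_pos (mul_pos hx.1 (by linarith [hx.2])) (A_pos hA (Ioo_subset_Icc_self hx))
    simp only [mem_setOf_eq, Pi.zero_apply]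
    exact fun hc => absurd hc (ne_of_gt hpos)
  refine le_antisymm ?_ (zero_le)
  calc μ (Ioo (0:ℝ) 1) = μ.restrict (Ioo (0:ℝ) 1) (Ioo (0:ℝ) 1) := by
        rw [Measure.restrict_apply measurableSet_Ioo, inter_self]
    _ ≤ μ.restrict (Ioo (0:ℝ) 1) {x | ¬ (x * (1 - x) / A x = (0:ℝ→ℝ) x)} :=
        measure_mono hsub
    _ = 0 := hnull

lemma A_one_of_tau_zero (hA : IsPickands A) (h : kendallTau A = 0) :
    ∀ t ∈ Icc (0:ℝ) 1, A t = 1 := by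
  have hμ0 := measure_Ioo_eq_zero_of_tau_zero hA h
  set SF := (D_mono hA).stieltjesFunction with hSF
  have hle : leftLim SF 1 ≤ SF 0 := by
    rw [StieltjesFunction.measure_Ioo, ENNReal.ofReal_eq_zero] at hμ0
    linarith
  -- pickandsD is constant = SF 0 on (0,1)
  have hDconst : ∀ y ∈ Ioo (0:ℝ) 1, pickandsD A y = SF 0 := by
    intro y hy
    have h1 : SF 0 ≤ pickandsD A y := by
      rw [hSF, Monotone.stieltjesFunction_eq]
      exact (D_mono hA).rightLim_le hy.1
    have h2 : pickandsD A y ≤ SF y := by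
      rw [hSF, Monotone.stieltjesFunction_eq]
      exact (D_mono hA).le_rightLim le_rfl
    have h3 : SF y ≤ leftLim SF 1 := SF.mono.le_leftLim hy.2
    linarith
  set c := SF 0 with hc
  have hslope : ∀ x y : ℝ, x ∈ Ioo (0:ℝ) 1 → y ∈ Ioo (0:ℝ) 1 → x < y →
      A y - A x = c * (y - x) := by
    intro x y hx hy hxy
    have hrx : rder A x = c := by
      rw [← pickandsD_eq hA hx.1.le hx.2]; exact hDconst x hx
    have hry : rder A y = c := by
      rw [← pickandsD_eq hA hy.1.le hy.2]; exact hDconst y hy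
    have hs1 := rder_le_slope hA hx.1.le hxy hy.2.le
    have hs2 := slope_le_rder hA hx.1.le hxy hy.2
    rw [hrx] at hs1; rw [hry] at hs2
    have hsl : slope A x y = c := le_antisymm hs2 hs1
    rw [slope_def_field, div_eq_iff (by linarith : y - x ≠ 0)] at hsl
    exact hsl
  set b := A (1/2) - c * (1/2) with hb
  have haff : ∀ t ∈ Ioo (0:ℝ) 1, A t = c * t + b := by
    intro t ht
    have hhalf : (1:ℝ)/2 ∈ Ioo (0:ℝ) 1 := by norm_num
    rcases lt_trichotomy t (1/2) with h' | h' | h'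
    · have := hslope t (1/2) ht hhalf h'
      rw [hb]; linarith
    · rw [h', hb]; ring
    · have := hslope (1/2) t hhalf ht h'
      rw [hb]; linarith
  have hmem0 : Ioo (0:ℝ) 1 ∈ 𝓝[>] (0:ℝ) := Ioo_mem_nhdsGT_of_mem ⟨le_rfl, one_pos⟩
  have hmem1 : Ioo (0:ℝ) 1 ∈ 𝓝[<] (1:ℝ) := Ioo_mem_nhdsLT_of_mem ⟨one_pos, le_rfl⟩
  have hb_le : b ≤ 1 := by
    have htend : Tendsto (fun t => c * t + b) (𝓝[>] (0:ℝ)) (𝓝 b) := by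
      have : Tendsto (fun t => c * t + b) (𝓝 (0:ℝ)) (𝓝 (c * 0 + b)) :=
        ((continuous_const.mul continuous_id).add continuous_const).tendsto 0
      simpa using this.mono_left nhdsWithin_le_nhds
    refine le_of_tendsto htend ?_
    filter_upwards [hmem0] with t ht
    rw [← haff t ht]
    exact A_ub hA (Ioo_subset_Icc_self ht)
  have hb_ge : 1 ≤ b := by
    have htend : Tendsto (fun t => c * t + b + t) (𝓝[>] (0:ℝ)) (𝓝 b) := by
      have : Tendsto (fun t => c * t + b + t) (𝓝 (0:ℝ)) (𝓝 (c * 0 + b + 0)) :=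
        (((continuous_const.mul continuous_id).add continuous_const).add continuous_id).tendsto 0
      simpa using this.mono_left nhdsWithin_le_nhds
    refine ge_of_tendsto htend ?_
    filter_upwards [hmem0] with t ht
    have h1 : 1 - t ≤ A t := le_trans (le_max_left _ _) (A_lb hA (Ioo_subset_Icc_self ht))
    rw [haff t ht] at h1
    linarith
  have hbe : b = 1 := le_antisymm hb_le hb_ge
  have hc_le : c ≤ 0 := by
    have h1 : A (1/2) ≤ 1 := A_ub hA (by norm_num)
    have h2 := haff (1/2) (by norm_num)
    rw [hbe] at h2
    rw [h2] at h1
    linarith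
  have hc_ge : 0 ≤ c := by
    have htend : Tendsto (fun t => c * t + b - t) (𝓝[<] (1:ℝ)) (𝓝 (c + b - 1)) := by
      have : Tendsto (fun t => c * t + b - t) (𝓝 (1:ℝ)) (𝓝 (c * 1 + b - 1)) :=
        (((continuous_const.mul continuous_id).add continuous_const).sub continuous_id).tendsto 1
      simpa using this.mono_left nhdsWithin_le_nhds
    have h0 : 0 ≤ c + b - 1 := by
      refine ge_of_tendsto htend ?_
      filter_upwards [hmem1] with t ht
      have h1 : t ≤ A t := le_trans (le_max_right _ _) (A_lb hA (Ioo_subset_Icc_self ht))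
      rw [haff t ht] at h1
      linarith
    linarith [hbe]
  have hce : c = 0 := le_antisymm hc_le hc_ge
  intro t ht
  rcases eq_or_lt_of_le ht.1 with h0 | h0
  · rw [← h0]; exact A_zero hA
  rcases eq_or_lt_of_le ht.2 with h1 | h1
  · rw [h1]; exact A_one hA
  · rw [haff t ⟨h0, h1⟩, hce, hbe]; ring



/-! ### A ≡ 1 → τ = 0 -/

lemma tau_zero_of_A_one (hA : IsPickands A) (h : ∀ t ∈ Icc (0:ℝ) 1, A t = 1) :
    kendallTau A = 0 := by
  set SF := (D_mono hA).stieltjesFunction with hSF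
  have hD : ∀ t : ℝ, 0 ≤ t → t < 1 → derivWithin A (Ioi t) t = 0 := by
    intro t ht0 ht1
    have hmem : Ioo t 1 ∈ 𝓝[>] t := Ioo_mem_nhdsGT_of_mem ⟨le_rfl, ht1⟩
    have heq : A =ᶠ[𝓝[>] t] (fun _ => (1:ℝ)) := by
      filter_upwards [hmem] with s hs
      exact h s ⟨le_trans ht0 hs.1.le, hs.2.le⟩
    have hder : HasDerivWithinAt A 0 (Ioi t) t :=
      (hasDerivWithinAt_const t (Ioi t) (1:ℝ)).congr_of_eventuallyEq heq (h t ⟨ht0, ht1.le⟩)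
    exact hder.derivWithin (uniqueDiffWithinAt_Ioi t)
  have hDval : ∀ t : ℝ, t < 1 → pickandsD A t = 0 := by
    intro t ht1
    unfold pickandsD
    rcases lt_or_ge t 0 with h' | h'
    · rw [if_pos h']; exact hD 0 le_rfl one_pos
    · rw [if_neg (not_lt.2 h'), if_pos ht1]; exact hD t h' ht1
  have hSFval : ∀ x : ℝ, x < 1 → SF x = 0 := by
    intro x hx
    rw [hSF, Monotone.stieltjesFunction_eq]
    refine rightLim_eq_of_tendsto ?_
    have hmem : Ioo x 1 ∈ 𝓝[>] x := Ioo_mem_nhdsGT_of_mem ⟨le_rfl, hx⟩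
    refine Tendsto.congr' ?_ tendsto_const_nhds
    filter_upwards [hmem] with s hs
    exact (hDval s hs.2).symm
  have hleft : leftLim SF 1 = 0 := by
    refine leftLim_eq_of_tendsto ?_
    have hmem : Ioo (0:ℝ) 1 ∈ 𝓝[<] (1:ℝ) := Ioo_mem_nhdsLT_of_mem ⟨one_pos, le_rfl⟩
    refine Tendsto.congr' ?_ tendsto_const_nhds
    filter_upwards [hmem] with s hs
    exact (hSFval s hs.2).symm
  have hμ0 : SF.measure (Ioo (0:ℝ) 1) = 0 := by
    rw [StieltjesFunction.measure_Ioo, hleft, hSFval 0 one_pos]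
    simp
  rw [tau_eq hA]
  rw [Measure.restrict_eq_zero.2 hμ0]
  exact integral_zero_measure _

/-! ### A = max → τ = 1 -/

lemma tau_one_of_A_max (hA : IsPickands A) (h : ∀ t ∈ Icc (0:ℝ) 1, A t = max t (1 - t)) :
    kendallTau A = 1 := by
  set SF := (D_mono hA).stieltjesFunction with hSF
  have hDlo : ∀ t : ℝ, 0 ≤ t → t < 1/2 → derivWithin A (Ioi t) t = -1 := by
    intro t ht0 ht1
    have hmem : Ioo t (1/2) ∈ 𝓝[>] t := Ioo_mem_nhdsGT_of_mem ⟨le_rfl, ht1⟩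
    have heq : A =ᶠ[𝓝[>] t] (fun s => 1 - s) := by
      filter_upwards [hmem] with s hs
      rw [h s ⟨le_trans ht0 hs.1.le, by linarith [hs.2]⟩]
      exact max_eq_right (by linarith [hs.2])
    have hid : HasDerivWithinAt (fun s : ℝ => 1 - s) (-1) (Ioi t) t := by
      simpa using (hasDerivWithinAt_id t (Ioi t)).const_sub (1:ℝ)
    have hAt : A t = 1 - t := by
      rw [h t ⟨ht0, by linarith⟩]; exact max_eq_right (by linarith)
    exact (hid.congr_of_eventuallyEq heq hAt).derivWithin (uniqueDiffWithinAt_Ioi t)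
  have hDhi : ∀ t : ℝ, 1/2 ≤ t → t < 1 → derivWithin A (Ioi t) t = 1 := by
    intro t ht0 ht1
    have hmem : Ioo t 1 ∈ 𝓝[>] t := Ioo_mem_nhdsGT_of_mem ⟨le_rfl, ht1⟩
    have heq : A =ᶠ[𝓝[>] t] (fun s => s) := by
      filter_upwards [hmem] with s hs
      rw [h s ⟨by linarith [hs.1], hs.2.le⟩]
      exact max_eq_left (by linarith [hs.1])
    have hAt : A t = t := by
      rw [h t ⟨by linarith, ht1.le⟩]; exact max_eq_left (by linarith)
    exact ((hasDerivWithinAt_id t (Ioi t)).congr_of_eventuallyEq heq hAt).derivWithin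
      (uniqueDiffWithinAt_Ioi t)
  have hDval : ∀ t : ℝ, pickandsD A t = if t < 1/2 then -1 else 1 := by
    intro t
    unfold pickandsD
    rcases lt_or_ge t 0 with h' | h'
    · rw [if_pos h', if_pos (by linarith : t < 1/2)]
      exact hDlo 0 le_rfl (by norm_num)
    rcases lt_or_ge t (1/2) with h2 | h2
    · rw [if_neg (not_lt.2 h'), if_pos (by linarith : t < 1), if_pos h2]
      exact hDlo t h' h2
    rcases lt_or_ge t 1 with h3 | h3
    · rw [if_neg (not_lt.2 h'), if_pos h3, if_neg (not_lt.2 h2)]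
      exact hDhi t h2 h3
    · rw [if_neg (not_lt.2 h'), if_neg (not_lt.2 h3), if_neg (not_lt.2 h2)]
  have hSFlo : ∀ x : ℝ, x < 1/2 → SF x = -1 := by
    intro x hx
    rw [hSF, Monotone.stieltjesFunction_eq]
    refine rightLim_eq_of_tendsto ?_
    have hmem : Ioo x (1/2) ∈ 𝓝[>] x := Ioo_mem_nhdsGT_of_mem ⟨le_rfl, hx⟩
    refine Tendsto.congr' ?_ tendsto_const_nhds
    filter_upwards [hmem] with s hs
    rw [hDval s, if_pos hs.2]
  have hSFhi : ∀ x : ℝ, 1/2 ≤ x → SF x = 1 := by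
    intro x hx
    rw [hSF, Monotone.stieltjesFunction_eq]
    refine rightLim_eq_of_tendsto ?_
    refine Tendsto.congr' ?_ tendsto_const_nhds
    filter_upwards [self_mem_nhdsWithin] with s hs
    rw [hDval s, if_neg (not_lt.2 (by linarith [mem_Ioi.1 hs] : 1/2 ≤ s))]
  have hleft_half : leftLim SF (1/2) = -1 := by
    refine leftLim_eq_of_tendsto ?_
    have hmem : Ioo (0:ℝ) (1/2) ∈ 𝓝[<] ((1:ℝ)/2) := Ioo_mem_nhdsLT_of_mem ⟨by norm_num, le_rfl⟩
    refine Tendsto.congr' ?_ tendsto_const_nhds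
    filter_upwards [hmem] with s hs
    exact (hSFlo s hs.2).symm
  have hleft_one : leftLim SF 1 = 1 := by
    refine leftLim_eq_of_tendsto ?_
    have hmem : Ioo ((1:ℝ)/2) 1 ∈ 𝓝[<] (1:ℝ) := Ioo_mem_nhdsLT_of_mem ⟨by norm_num, le_rfl⟩
    refine Tendsto.congr' ?_ tendsto_const_nhds
    filter_upwards [hmem] with s hs
    exact (hSFhi s hs.1.le).symm
  have hμ1 : SF.measure (Ioo (0:ℝ) (1/2)) = 0 := by
    rw [StieltjesFunction.measure_Ioo, hleft_half, hSFlo 0 (by norm_num)]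
    simp
  have hμ2 : SF.measure (Ioo ((1:ℝ)/2) 1) = 0 := by
    rw [StieltjesFunction.measure_Ioo, hleft_one, hSFhi (1/2) le_rfl]
    simp
  have hμ3 : SF.measure {(1:ℝ)/2} = ENNReal.ofReal 2 := by
    rw [StieltjesFunction.measure_singleton, hleft_half, hSFhi (1/2) le_rfl]
    norm_num
  have hae : (Ioo (0:ℝ) 1 : Set ℝ) =ᵐ[SF.measure] ({(1:ℝ)/2} : Set ℝ) := by
    rw [MeasureTheory.ae_eq_set]
    constructor
    · refine measure_mono_null ?_ (?_ : SF.measure (Ioo (0:ℝ) (1/2) ∪ Ioo ((1:ℝ)/2) 1) = 0)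
      · intro s hs
        rcases hs with ⟨⟨h0, h1⟩, hne⟩
        simp only [mem_singleton_iff] at hne
        rcases lt_trichotomy s (1/2) with h' | h' | h'
        · exact Or.inl ⟨h0, h'⟩
        · exact absurd h' hne
        · exact Or.inr ⟨h', h1⟩
      · exact le_antisymm (le_trans (measure_union_le _ _) (by rw [hμ1, hμ2]; simp)) (zero_le)
    · refine measure_mono_null ?_ hμ1
      intro s hs
      rcases hs with ⟨hs1, hs2⟩
      simp only [mem_singleton_iff] at hs1
      exfalso
      exact hs2 (by rw [hs1]; exact ⟨by norm_num, by norm_num⟩)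
  rw [tau_eq hA, ← hSF, setIntegral_congr_set hae]
  rw [Measure.restrict_singleton, integral_smul_measure, integral_dirac, hμ3]
  have hAhalf : A (1/2) = 1/2 := by
    rw [h (1/2) (by norm_num)]; norm_num
  rw [hAhalf]
  rw [ENNReal.toReal_ofReal (by norm_num : (0:ℝ) ≤ 2)]
  norm_num


end PickAux

end PickandsProof

/-- for every Pickands dependence function `A`, `τ(A) ∈ [0,1]`;
moreover `τ(A) = 0` iff `A ≡ 1` on `[0,1]`, and `τ(A) = 1` iff
`A t = max t (1 - t)` on `[0,1]`. -/
theorem kendallTau_mem_Icc_and_eq_iff (A : ℝ → ℝ) (hA : IsPickands A) :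
    kendallTau A ∈ Set.Icc (0 : ℝ) 1 ∧
      (kendallTau A = 0 ↔ ∀ t ∈ Set.Icc (0 : ℝ) 1, A t = 1) ∧
      (kendallTau A = 1 ↔ ∀ t ∈ Set.Icc (0 : ℝ) 1, A t = max t (1 - t)) := by
  exact ⟨⟨PickAux.tau_nonneg hA, PickAux.tau_le_one hA⟩,
    ⟨fun h => PickAux.A_one_of_tau_zero hA h, fun h => PickAux.tau_zero_of_A_one hA h⟩,
    fun h => PickAux.A_max_of_tau_one hA h, fun h => PickAux.tau_one_of_A_max hA h⟩
end

section
/- For every t ∈ [0,1] the inequality 3t/(2+t) ≥ −1 + √(1 + 3t) holds, with equality if and only if t = 0 or t = 1. -/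
open MeasureTheory

/-! Substituting `s = √(1 + 3t)`, so that `t = (s² - 1)/3` and `s ∈ [1, 2]`, the gap between the two
bounds becomes `(s - 1)² (2 - s) / (s² + 5)`: nonnegative on `[1, 2]` and zero exactly at its endpoints. -/

lemma three_mul_div_two_add_sub_eq {s t : ℝ} (hs : s ^ 2 = 1 + 3 * t) :
    3 * t / (2 + t) - (-1 + s) = (s - 1) ^ 2 * (2 - s) / (s ^ 2 + 5) := by
  have h3t : 3 * t = s ^ 2 - 1 := by linarith
  have h2t : 2 + t = (s ^ 2 + 5) / 3 := by linarith
  have hpos : s ^ 2 + 5 ≠ 0 := by positivity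
  rw [h3t, h2t]
  field_simp
  ring

lemma one_le_sqrt_one_add_three_mul {t : ℝ} (ht : 0 ≤ t) : 1 ≤ Real.sqrt (1 + 3 * t) :=
  Real.one_le_sqrt.mpr (by linarith)

lemma sqrt_one_add_three_mul_le_two {t : ℝ} (ht : t ≤ 1) : Real.sqrt (1 + 3 * t) ≤ 2 :=
  Real.sqrt_le_iff.mpr ⟨by norm_num, by linarith⟩

/-- for every `t ∈ [0,1]`, `3t/(2+t) ≥ -1 + √(1+3t)`, with equality
iff `t = 0` or `t = 1`. -/
theorem bound_comparison (t : ℝ) (ht : t ∈ Set.Icc (0 : ℝ) 1) :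
    3 * t / (2 + t) ≥ -1 + Real.sqrt (1 + 3 * t) ∧
      (3 * t / (2 + t) = -1 + Real.sqrt (1 + 3 * t) ↔ t = 0 ∨ t = 1) := by
  set s := Real.sqrt (1 + 3 * t)
  have hs : s ^ 2 = 1 + 3 * t := Real.sq_sqrt (by linarith [ht.1])
  have hs1 : 1 ≤ s := one_le_sqrt_one_add_three_mul ht.1
  have hs2 : s ≤ 2 := sqrt_one_add_three_mul_le_two ht.2
  have gap := three_mul_div_two_add_sub_eq hs
  constructor
  · have gap_nonneg : 0 ≤ (s - 1) ^ 2 * (2 - s) / (s ^ 2 + 5) :=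
      div_nonneg (mul_nonneg (sq_nonneg _) (by linarith)) (by positivity)
    linarith
  · rw [← sub_eq_zero, gap, div_eq_zero_iff, mul_eq_zero, pow_eq_zero_iff two_ne_zero,
      sub_eq_zero, sub_eq_zero]
    have hpos : s ^ 2 + 5 ≠ 0 := by positivity
    constructor
    · rintro ((h | h) | h)
      · left; nlinarith
      · right; nlinarith
      · exact absurd h hpos
    · rintro (rfl | rfl)
      · left; left; nlinarith
      · left; right; nlinarith
end

section
/- The piecewise linear Pickands dependence functions are dense in the set of all Pickands dependence functions with respect to the uniform norm: for every Pickands dependence function A and every ε > 0 there exist n ∈ ℕ, points 0 = x₀ < x₁ < ⋯ < xₙ < x_{n+1} = 1, and a Pickands dependence function B which is affine on each interval [x_{i−1}, x_i] for i = 1, …, n+1, such that sup_{t ∈ [0,1]} |A(t) − B(t)| < ε. -/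
open MeasureTheory

lemma pickands_lip (A : ℝ → ℝ) (hA : IsPickands A) :
    ∀ s t : ℝ, s ∈ Set.Icc (0:ℝ) 1 → t ∈ Set.Icc (0:ℝ) 1 → s ≤ t →
      A t - A s ≤ t - s ∧ A s - A t ≤ t - s := by
  obtain ⟨hc, hb⟩ := hA
  have h0mem : (0:ℝ) ∈ Set.Icc (0:ℝ) 1 := ⟨le_refl 0, zero_le_one⟩
  have h1mem : (1:ℝ) ∈ Set.Icc (0:ℝ) 1 := ⟨zero_le_one, le_refl 1⟩
  have h0 : A 0 = 1 := by
    have := hb 0 h0mem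
    have h' : (1:ℝ) ≤ A 0 := le_trans (by norm_num) this.1
    linarith [this.2]
  have h1 : A 1 = 1 := by
    have := hb 1 h1mem
    have h' : (1:ℝ) ≤ A 1 := le_trans (by norm_num) this.1
    linarith [this.2]
  intro s t hs ht hst
  constructor
  · rcases eq_or_lt_of_le hst with rfl | hlt
    · simp
    rcases eq_or_lt_of_le ht.2 with ht1 | ht1
    · have hAs : s ≤ A s := le_trans (le_max_right _ _) (hb s hs).1
      rw [ht1, h1]; linarith
    · have key := hc.slope_mono_adjacent hs h1mem hlt ht1
      rw [h1] at key
      have hAt : t ≤ A t := le_trans (le_max_right _ _) (hb t ht).1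
      have h2 : (1 - A t) / (1 - t) ≤ 1 := by
        rw [div_le_one (by linarith)]; linarith
      have h3 : (A t - A s) / (t - s) ≤ 1 := le_trans key h2
      rw [div_le_one (by linarith)] at h3
      linarith
  · rcases eq_or_lt_of_le hst with rfl | hlt
    · simp
    rcases eq_or_lt_of_le hs.1 with hs0 | hs0
    · have hAt : 1 - t ≤ A t := le_trans (le_max_left _ _) (hb t ht).1
      rw [← hs0, h0]; linarith
    · have key := hc.slope_mono_adjacent h0mem ht hs0 hlt
      rw [h0] at key
      have hAs : 1 - s ≤ A s := le_trans (le_max_left _ _) (hb s hs).1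
      have h2 : (-1 : ℝ) ≤ (A s - 1) / (s - 0) := by
        rw [le_div_iff₀ (by linarith)]; linarith
      have h3 : (-1 : ℝ) ≤ (A t - A s) / (t - s) := le_trans h2 key
      rw [le_div_iff₀ (by linarith)] at h3
      linarith

/-- piecewise linear Pickands dependence functions are dense in the set
of all Pickands dependence functions with respect to the uniform norm on `[0,1]`. -/
theorem piecewise_linear_dense (A : ℝ → ℝ) (hA : IsPickands A) (ε : ℝ) (hε : 0 < ε) :
    ∃ (n : ℕ) (x : ℕ → ℝ) (B : ℝ → ℝ),
      x 0 = 0 ∧ x (n + 1) = 1 ∧ (∀ i ≤ n, x i < x (i + 1)) ∧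
      IsPickands B ∧ (∀ i ≤ n, AffineOnIcc B (x i) (x (i + 1))) ∧
      ∀ t ∈ Set.Icc (0 : ℝ) 1, |A t - B t| < ε := by
  obtain ⟨n, hn⟩ : ∃ n : ℕ, 1 / ((n : ℝ) + 1) < ε := exists_nat_one_div_lt hε
  have hlip := pickands_lip A hA
  obtain ⟨hc, hb⟩ := hA
  have hN : (0:ℝ) < (n : ℝ) + 1 := by positivity
  set x : ℕ → ℝ := fun i => (i : ℝ) / ((n : ℝ) + 1) with hxdef
  have hx0 : x 0 = 0 := by simp [hxdef]
  have hxN : x (n + 1) = 1 := by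
    simp only [hxdef]; push_cast; field_simp
  have hd : ∀ i : ℕ, x (i + 1) - x i = 1 / ((n : ℝ) + 1) := by
    intro i; simp only [hxdef]; push_cast; field_simp; ring
  have hxlt : ∀ i : ℕ, x i < x (i + 1) := by
    intro i; have := hd i; have : x i + 1/((n:ℝ)+1) = x (i+1) := by linarith
    have h' : 0 < 1/((n:ℝ)+1) := by positivity
    linarith
  have hxmono : ∀ i j : ℕ, i ≤ j → x i ≤ x j := by
    intro i j hij
    simp only [hxdef]
    gcongr
  have hxmem : ∀ i : ℕ, i ≤ n + 1 → x i ∈ Set.Icc (0:ℝ) 1 := by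
    intro i hi
    constructor
    · simp only [hxdef]; positivity
    · rw [← hxN]; exact hxmono i (n+1) hi
  -- slopes and secant lines
  set m : ℕ → ℝ := fun i => (A (x (i + 1)) - A (x i)) * ((n : ℝ) + 1) with hmdef
  set L : ℕ → ℝ → ℝ := fun i t => A (x i) + m i * (t - x i) with hLdef
  -- convex-combination representation of L
  have hcombo : ∀ (i : ℕ) (t : ℝ),
      L i t = (x (i+1) - t) * ((n:ℝ)+1) * A (x i) + (t - x i) * ((n:ℝ)+1) * A (x (i+1)) := by
    intro i t
    simp only [hLdef, hmdef, hxdef]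
    push_cast
    field_simp
    ring
  have hab1 : ∀ (i : ℕ) (t : ℝ),
      (x (i+1) - t) * ((n:ℝ)+1) + (t - x i) * ((n:ℝ)+1) = 1 := by
    intro i t
    simp only [hxdef]
    push_cast
    field_simp
    ring
  -- chord above the function on [x i, x (i+1)]
  have hAleL : ∀ i ≤ n, ∀ t ∈ Set.Icc (x i) (x (i+1)), A t ≤ L i t := by
    intro i hi t ht
    set a := (x (i+1) - t) * ((n:ℝ)+1) with hadef
    set b := (t - x i) * ((n:ℝ)+1) with hbdef
    have ha : 0 ≤ a := by apply mul_nonneg; linarith [ht.2]; linarith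
    have hb' : 0 ≤ b := by apply mul_nonneg; linarith [ht.1]; linarith
    have habs : a + b = 1 := hab1 i t
    have hsmul : a • x i + b • x (i+1) = t := by
      simp only [smul_eq_mul, hadef, hbdef, hxdef]
      push_cast
      field_simp
      ring
    have key := hc.2 (hxmem i (by omega)) (hxmem (i+1) (by omega)) ha hb' habs
    rw [hsmul] at key
    rw [hcombo i t]
    simpa [smul_eq_mul, hadef, hbdef] using key
  -- secant line below the function outside (x i, x (i+1))
  have hLleA : ∀ i ≤ n, ∀ t ∈ Set.Icc (0:ℝ) 1, (t ≤ x i ∨ x (i+1) ≤ t) → L i t ≤ A t := by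
    intro i hi t ht hside
    have hmival : (A (x (i+1)) - A (x i)) / (x (i+1) - x i) = m i := by
      rw [hd i, hmdef]; field_simp
    rcases hside with hcase | hcase
    · rcases eq_or_lt_of_le hcase with rfl | hlt
      · simp [hLdef]
      · have key := hc.slope_mono_adjacent ht (hxmem (i+1) (by omega)) hlt (hxlt i)
        rw [hmival] at key
        rw [div_le_iff₀ (by linarith [hxlt i, hlt] : (0:ℝ) < x i - t)] at key
        simp only [hLdef]
        have hr : m i * (t - x i) = -(m i * (x i - t)) := by ring
        linarith [key, hr]
    · rcases eq_or_lt_of_le hcase with heq | hlt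
      · have : L i (x (i+1)) = A (x (i+1)) := by
          simp only [hLdef, hmdef, hxdef]
          push_cast
          field_simp
          ring
        rw [← heq, this]
      · have key := hc.slope_mono_adjacent (hxmem i (by omega)) ht (hxlt i) hlt
        rw [hmival] at key
        rw [le_div_iff₀ (by linarith : (0:ℝ) < t - x (i+1))] at key
        have hid : A (x i) + m i * (x (i+1) - x i) = A (x (i+1)) := by
          simp only [hmdef, hxdef]
          push_cast
          field_simp
          ring
        simp only [hLdef]
        have hr : m i * (t - x i) = m i * (t - x (i+1)) + m i * (x (i+1) - x i) := by ring
        linarith [key, hid, hr]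
  -- the piecewise linear function
  have hne : (Finset.range (n+1)).Nonempty := Finset.nonempty_range_iff.mpr n.succ_ne_zero
  set B : ℝ → ℝ := fun t => (Finset.range (n+1)).sup' hne (fun i => L i t) with hBdef
  have hLleB : ∀ i ≤ n, ∀ t : ℝ, L i t ≤ B t := by
    intro i hi t
    exact Finset.le_sup' (fun j => L j t) (Finset.mem_range.mpr (by omega))
  have hBeq : ∀ j ≤ n, ∀ t, t ∈ Set.Icc (x j) (x (j+1)) → t ∈ Set.Icc (0:ℝ) 1 →
      B t = L j t := by
    intro j hj t ht ht01
    apply le_antisymm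
    · apply Finset.sup'_le
      intro i hi
      rw [Finset.mem_range] at hi
      rcases lt_trichotomy i j with hij | rfl | hij
      · have h1 : x (i+1) ≤ t := le_trans (hxmono (i+1) j (by omega)) ht.1
        exact le_trans (hLleA i (by omega) t ht01 (Or.inr h1)) (hAleL j hj t ht)
      · exact le_refl _
      · have h1 : t ≤ x i := le_trans ht.2 (hxmono (j+1) i (by omega))
        exact le_trans (hLleA i (by omega) t ht01 (Or.inl h1)) (hAleL j hj t ht)
    · exact hLleB j hj t
  -- covering
  have hcover : ∀ t ∈ Set.Icc (0:ℝ) 1, ∃ j ≤ n, t ∈ Set.Icc (x j) (x (j+1)) := by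
    intro t ht
    set k : ℕ := (⌊t * ((n:ℝ)+1)⌋).toNat with hkdef
    have htN : 0 ≤ t * ((n:ℝ)+1) := mul_nonneg ht.1 (by linarith)
    have hfl : (0:ℤ) ≤ ⌊t * ((n:ℝ)+1)⌋ := Int.floor_nonneg.mpr htN
    have hcast : (k : ℝ) = ((⌊t * ((n:ℝ)+1)⌋ : ℤ) : ℝ) := by
      rw [hkdef]; exact_mod_cast Int.toNat_of_nonneg hfl
    have hk1 : (k : ℝ) ≤ t * ((n:ℝ)+1) := by
      rw [hcast]; exact Int.floor_le _
    have hk2 : t * ((n:ℝ)+1) < (k : ℝ) + 1 := by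
      rw [hcast]; exact Int.lt_floor_add_one _
    refine ⟨min n k, min_le_left _ _, ?_, ?_⟩
    · simp only [hxdef]
      rw [div_le_iff₀ hN]
      calc ((min n k : ℕ) : ℝ) ≤ (k : ℝ) := by exact_mod_cast min_le_right n k
        _ ≤ t * ((n:ℝ)+1) := hk1
    · rcases le_or_gt k n with hkn | hkn
      · have : min n k = k := min_eq_right hkn
        rw [this]
        simp only [hxdef]
        rw [le_div_iff₀ hN]
        push_cast
        linarith [hk2]
      · have : min n k = n := min_eq_left (by omega)
        rw [this, hxN]
        exact ht.2
  -- now assemble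
  refine ⟨n, x, B, hx0, hxN, fun i _ => hxlt i, ⟨?_, ?_⟩, ?_, ?_⟩
  · -- ConvexOn
    refine ⟨convex_Icc 0 1, ?_⟩
    intro p hp q hq a b ha hb' hab
    apply Finset.sup'_le
    intro i hi
    rw [Finset.mem_range] at hi
    have heq : L i (a • p + b • q) = a * L i p + b * L i q := by
      simp only [hLdef, smul_eq_mul]
      linear_combination (m i * x i - A (x i)) * hab
    rw [heq]
    simp only [smul_eq_mul]
    exact add_le_add (mul_le_mul_of_nonneg_left (hLleB i (by omega) p) ha)
      (mul_le_mul_of_nonneg_left (hLleB i (by omega) q) hb')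
  · -- bounds
    intro t ht
    obtain ⟨j, hj, htj⟩ := hcover t ht
    rw [hBeq j hj t htj ht]
    constructor
    · exact le_trans (hb t ht).1 (hAleL j hj t htj)
    · rw [hcombo j t]
      have h1 := (hb (x j) (hxmem j (by omega))).2
      have h2 := (hb (x (j+1)) (hxmem (j+1) (by omega))).2
      have ha : 0 ≤ (x (j+1) - t) * ((n:ℝ)+1) := mul_nonneg (by linarith [htj.2]) (by linarith)
      have hb2 : 0 ≤ (t - x j) * ((n:ℝ)+1) := mul_nonneg (by linarith [htj.1]) (by linarith)
      nlinarith [hab1 j t]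
  · -- affine pieces
    intro i hi
    refine ⟨m i, A (x i) - m i * x i, ?_⟩
    intro t ht
    have ht01 : t ∈ Set.Icc (0:ℝ) 1 := by
      constructor
      · exact le_trans (hxmem i (by omega)).1 ht.1
      · exact le_trans ht.2 (hxmem (i+1) (by omega)).2
    rw [hBeq i hi t ht ht01]
    simp only [hLdef]; ring
  · -- error bound
    intro t ht
    obtain ⟨j, hj, htj⟩ := hcover t ht
    rw [hBeq j hj t htj ht]
    have hxj01 := hxmem j (by omega)
    have hxj101 := hxmem (j+1) (by omega)
    have hl1 := hlip (x j) t hxj01 ht htj.1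
    have hl2 := hlip t (x (j+1)) ht hxj101 htj.2
    have hdj := hd j
    have hlen1 : t - x j ≤ 1/((n:ℝ)+1) := by linarith [htj.2]
    have hlen2 : x (j+1) - t ≤ 1/((n:ℝ)+1) := by linarith [htj.1]
    rw [abs_sub_lt_iff]
    rw [hcombo j t]
    set a := (x (j+1) - t) * ((n:ℝ)+1) with hadef
    set b := (t - x j) * ((n:ℝ)+1) with hbdef
    have ha : 0 ≤ a := by rw [hadef]; exact mul_nonneg (by linarith [htj.2]) (by linarith)
    have hb2 : 0 ≤ b := by rw [hbdef]; exact mul_nonneg (by linarith [htj.1]) (by linarith)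
    have habs : a + b = 1 := hab1 j t
    have hAt : a * A t + b * A t = A t := by linear_combination A t * habs
    have habsN : a * (1/((n:ℝ)+1)) + b * (1/((n:ℝ)+1)) = 1/((n:ℝ)+1) := by
      linear_combination (1/((n:ℝ)+1)) * habs
    have e1 := mul_le_mul_of_nonneg_left hl1.1 ha
    have e2 := mul_le_mul_of_nonneg_left hl1.2 ha
    have e3 := mul_le_mul_of_nonneg_left hl2.1 hb2
    have e4 := mul_le_mul_of_nonneg_left hl2.2 hb2
    have f1 := mul_le_mul_of_nonneg_left hl1.1 hb2
    have f2 := mul_le_mul_of_nonneg_left hl1.2 hb2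
    have f3 := mul_le_mul_of_nonneg_left hl2.1 ha
    have f4 := mul_le_mul_of_nonneg_left hl2.2 ha
    have g1 := mul_le_mul_of_nonneg_left hlen1 ha
    have g2 := mul_le_mul_of_nonneg_left hlen2 ha
    have g3 := mul_le_mul_of_nonneg_left hlen1 hb2
    have g4 := mul_le_mul_of_nonneg_left hlen2 hb2
    constructor
    · linarith [e1, e2, e3, e4, f1, f2, f3, f4, g1, g2, g3, g4, hAt, habsN]
    · linarith [e1, e2, e3, e4, f1, f2, f3, f4, g1, g2, g3, g4, hAt, habsN]
end

section
/- The maps A ↦ τ(A) and A ↦ ρ(A) are continuous on the set of Pickands dependence functions with respect to the uniform norm: if (Aₙ) is a sequence of Pickands dependence functions converging uniformly on [0,1] to a Pickands dependence function A, then τ(Aₙ) → τ(A) and ρ(Aₙ) → ρ(A). -/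
open MeasureTheory

open Set Filter Topology

namespace PK

variable {A : ℝ → ℝ}

lemma slope_eq (f : ℝ → ℝ) (a b : ℝ) : slope f a b = (f b - f a) / (b - a) :=
  slope_def_field f a b

lemma one_sub_le (hA : IsPickands A) {t : ℝ} (ht : t ∈ Icc (0:ℝ) 1) : 1 - t ≤ A t :=
  le_trans (le_max_left _ _) (hA.2 t ht).1

lemma self_le (hA : IsPickands A) {t : ℝ} (ht : t ∈ Icc (0:ℝ) 1) : t ≤ A t :=
  le_trans (le_max_right _ _) (hA.2 t ht).1

lemma le_one (hA : IsPickands A) {t : ℝ} (ht : t ∈ Icc (0:ℝ) 1) : A t ≤ 1 := (hA.2 t ht).2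

lemma half_le (hA : IsPickands A) {t : ℝ} (ht : t ∈ Icc (0:ℝ) 1) : 1/2 ≤ A t := by
  rcases le_total t (1/2) with h | h
  · have := one_sub_le hA ht; linarith
  · have := self_le hA ht; linarith

lemma pos (hA : IsPickands A) {t : ℝ} (ht : t ∈ Icc (0:ℝ) 1) : 0 < A t := by
  have := half_le hA ht; linarith

lemma A_zero (hA : IsPickands A) : A 0 = 1 := by
  have h1 := one_sub_le hA (t := 0) (by norm_num)
  have h2 := le_one hA (t := 0) (by norm_num)
  linarith

lemma A_one (hA : IsPickands A) : A 1 = 1 := by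
  have h1 := self_le hA (t := 1) (by norm_num)
  have h2 := le_one hA (t := 1) (by norm_num)
  linarith

lemma slope_le_one (hA : IsPickands A) {x y : ℝ} (hx : x ∈ Icc (0:ℝ) 1)
    (hy : y ∈ Icc (0:ℝ) 1) (hxy : x < y) : slope A x y ≤ 1 := by
  have hx1 : x < 1 := lt_of_lt_of_le hxy hy.2
  have hone : slope A x 1 ≤ 1 := by
    rw [slope_eq, A_one hA, div_le_one (by linarith)]
    have := self_le hA hx; linarith
  rcases eq_or_lt_of_le hy.2 with rfl | hy1
  · exact hone
  · refine le_trans ?_ hone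
    exact hA.1.slope_mono ⟨hx.1, hx.2⟩ ⟨hy, hxy.ne'⟩
      ⟨⟨zero_le_one, le_rfl⟩, hx1.ne'⟩ hy.2

lemma neg_one_le_slope (hA : IsPickands A) {x y : ℝ} (hx : x ∈ Icc (0:ℝ) 1)
    (hy : y ∈ Icc (0:ℝ) 1) (hxy : x < y) : -1 ≤ slope A x y := by
  have h0y : 0 < y := lt_of_le_of_lt hx.1 hxy
  have hzero : -1 ≤ slope A 0 y := by
    rw [slope_eq, A_zero hA, sub_zero, le_div_iff₀ h0y]
    have := one_sub_le hA hy; linarith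
  rcases eq_or_lt_of_le hx.1 with rfl | hx0
  · exact hzero
  · refine le_trans hzero ?_
    rw [slope_comm A 0 y, slope_comm A x y]
    exact hA.1.slope_mono ⟨hy.1, hy.2⟩ ⟨⟨le_rfl, zero_le_one⟩, h0y.ne⟩
      ⟨hx, hxy.ne⟩ hx.1

lemma abs_sub_le (hA : IsPickands A) {x y : ℝ} (hx : x ∈ Icc (0:ℝ) 1)
    (hy : y ∈ Icc (0:ℝ) 1) : |A y - A x| ≤ |y - x| := by
  rcases lt_trichotomy x y with h | rfl | h
  · have h1 := slope_le_one hA hx hy h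
    have h2 := neg_one_le_slope hA hx hy h
    rw [slope_eq] at h1 h2
    rw [abs_le, abs_of_pos (sub_pos.2 h)]
    constructor
    · rw [le_div_iff₀ (sub_pos.2 h)] at h2; linarith
    · rw [div_le_one (sub_pos.2 h)] at h1; linarith
  · simp
  · have h1 := slope_le_one hA hy hx h
    have h2 := neg_one_le_slope hA hy hx h
    rw [slope_eq] at h1 h2
    rw [abs_le, abs_of_neg (sub_neg.2 h)]
    constructor
    · rw [div_le_one (sub_pos.2 h)] at h1; linarith
    · rw [le_div_iff₀ (sub_pos.2 h)] at h2; linarith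

lemma continuousOn (hA : IsPickands A) : ContinuousOn A (Icc (0:ℝ) 1) := by
  refine LipschitzOnWith.continuousOn (K := 1) ?_
  refine LipschitzOnWith.of_dist_le_mul fun x hx y hy => ?_
  rw [Real.dist_eq, Real.dist_eq, NNReal.coe_one, one_mul]
  exact abs_sub_le hA hy hx

lemma hasDerivWithinAt_pickandsD (hA : IsPickands A) {t : ℝ} (ht : t ∈ Ico (0:ℝ) 1) :
    HasDerivWithinAt A (pickandsD A t) (Ioi t) t := by
  have htI : t ∈ Icc (0:ℝ) 1 := ⟨ht.1, ht.2.le⟩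
  have hne : (Ioo t 1).Nonempty := nonempty_Ioo.2 ht.2
  have hsub : Ioo t 1 ⊆ Icc (0:ℝ) 1 \ {t} := fun y hy =>
    ⟨⟨le_trans ht.1 hy.1.le, hy.2.le⟩, (hy.1.ne' : y ≠ t)⟩
  have hmono : MonotoneOn (slope A t) (Ioo t 1) := (hA.1.slope_mono htI).mono hsub
  have hbdd : BddBelow (slope A t '' Ioo t 1) := by
    refine ⟨-1, ?_⟩
    rintro z ⟨y, hy, rfl⟩
    exact neg_one_le_slope hA htI ⟨le_trans ht.1 hy.1.le, hy.2.le⟩ hy.1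
  have htend := MonotoneOn.tendsto_nhdsWithin_Ioo_right hne hmono hbdd
  have hd : HasDerivWithinAt A (sInf (slope A t '' Ioo t 1)) (Ioi t) t := by
    rw [hasDerivWithinAt_iff_tendsto_slope' (by simp)]
    exact htend
  have heq : pickandsD A t = sInf (slope A t '' Ioo t 1) := by
    rw [pickandsD, if_neg (not_lt.2 ht.1), if_pos ht.2]
    exact hd.derivWithin (uniqueDiffWithinAt_Ioi t)
  rw [heq]; exact hd

lemma tendsto_slope_pickandsD (hA : IsPickands A) {t : ℝ} (ht : t ∈ Ico (0:ℝ) 1) :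
    Tendsto (slope A t) (𝓝[>] t) (𝓝 (pickandsD A t)) :=
  (hasDerivWithinAt_iff_tendsto_slope' (by simp)).mp (hasDerivWithinAt_pickandsD hA ht)

lemma pickandsD_le_slope (hA : IsPickands A) {t y : ℝ} (ht : t ∈ Ico (0:ℝ) 1)
    (hy : y ∈ Icc (0:ℝ) 1) (hty : t < y) : pickandsD A t ≤ slope A t y :=
  hA.1.le_slope_of_hasDerivWithinAt_Ioi ⟨ht.1, ht.2.le⟩ hy hty (hasDerivWithinAt_pickandsD hA ht)

lemma slope_le_pickandsD (hA : IsPickands A) {x t : ℝ} (hx : x ∈ Icc (0:ℝ) 1)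
    (ht : t ∈ Ico (0:ℝ) 1) (hxt : x < t) : slope A x t ≤ pickandsD A t := by
  refine ge_of_tendsto (tendsto_slope_pickandsD hA ht) ?_
  filter_upwards [Ioo_mem_nhdsGT_of_mem (⟨le_rfl, ht.2⟩ : t ∈ Ico t 1)] with y hy
  calc slope A x t = slope A t x := slope_comm A x t
    _ ≤ slope A t y := by
        refine hA.1.slope_mono ⟨ht.1, ht.2.le⟩ ⟨hx, hxt.ne⟩
          ⟨⟨le_trans ht.1 hy.1.le, hy.2.le⟩, hy.1.ne'⟩ (le_of_lt (lt_trans hxt hy.1))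

lemma pickandsD_of_neg {t : ℝ} (ht : t < 0) : pickandsD A t = pickandsD A 0 := by
  simp [pickandsD, ht]

lemma pickandsD_of_one_le {t : ℝ} (ht : 1 ≤ t) : pickandsD A t = 1 := by
  rw [pickandsD, if_neg (by linarith), if_neg (by linarith)]

lemma pickandsD_le_one' (hA : IsPickands A) {t : ℝ} (ht : t ∈ Ico (0:ℝ) 1) :
    pickandsD A t ≤ 1 := by
  refine le_trans (pickandsD_le_slope hA ht ⟨zero_le_one, le_rfl⟩ ht.2) ?_
  exact slope_le_one hA ⟨ht.1, ht.2.le⟩ ⟨zero_le_one, le_rfl⟩ ht.2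

lemma pickandsD_le_one (hA : IsPickands A) (t : ℝ) : pickandsD A t ≤ 1 := by
  rcases lt_or_ge t 0 with h | h
  · rw [pickandsD_of_neg h]; exact pickandsD_le_one' hA ⟨le_rfl, one_pos⟩
  rcases lt_or_ge t 1 with h1 | h1
  · exact pickandsD_le_one' hA ⟨h, h1⟩
  · rw [pickandsD_of_one_le h1]

lemma neg_one_le_pickandsD' (hA : IsPickands A) {t : ℝ} (ht : t ∈ Ico (0:ℝ) 1) :
    -1 ≤ pickandsD A t := by
  refine ge_of_tendsto (tendsto_slope_pickandsD hA ht) ?_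
  filter_upwards [Ioo_mem_nhdsGT_of_mem (⟨le_rfl, ht.2⟩ : t ∈ Ico t 1)] with y hy
  exact neg_one_le_slope hA ⟨ht.1, ht.2.le⟩ ⟨le_trans ht.1 hy.1.le, hy.2.le⟩ hy.1

lemma neg_one_le_pickandsD (hA : IsPickands A) (t : ℝ) : -1 ≤ pickandsD A t := by
  rcases lt_or_ge t 0 with h | h
  · rw [pickandsD_of_neg h]; exact neg_one_le_pickandsD' hA ⟨le_rfl, one_pos⟩
  rcases lt_or_ge t 1 with h1 | h1
  · exact neg_one_le_pickandsD' hA ⟨h, h1⟩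
  · rw [pickandsD_of_one_le h1]; norm_num

lemma pickandsD_mono (hA : IsPickands A) : Monotone (pickandsD A) := by
  have aux : ∀ s t : ℝ, 0 ≤ s → s ≤ t → pickandsD A s ≤ pickandsD A t := by
    intro s t hs0 hst
    rcases lt_or_ge s 1 with hs1 | hs1
    · rcases lt_or_ge t 1 with ht1 | ht1
      · rcases eq_or_lt_of_le hst with rfl | hst'
        · exact le_rfl
        · exact le_trans (pickandsD_le_slope hA ⟨hs0, hs1⟩ ⟨le_trans hs0 hst, ht1.le⟩ hst')
            (slope_le_pickandsD hA ⟨hs0, hs1.le⟩ ⟨le_trans hs0 hst, ht1⟩ hst')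
      · rw [pickandsD_of_one_le ht1]; exact pickandsD_le_one hA s
    · rw [pickandsD_of_one_le hs1, pickandsD_of_one_le (le_trans hs1 hst)]
  intro s t hst
  rcases lt_or_ge s 0 with hs0 | hs0
  · rw [pickandsD_of_neg hs0]
    rcases lt_or_ge t 0 with ht0 | ht0
    · rw [pickandsD_of_neg ht0]
    · exact aux 0 t le_rfl ht0
  · exact aux s t hs0 hst


noncomputable def abar (A : ℝ → ℝ) (s : ℝ) : ℝ := A (max 0 (min 1 s))

noncomputable def hbar (A : ℝ → ℝ) (s : ℝ) : ℝ :=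
  ((1 - 2*s) * abar A s - s * (1 - s) * pickandsD A s) / (abar A s) ^ 2

noncomputable def gker (A : ℝ → ℝ) (s : ℝ) : ℝ := hbar A s * (1 - pickandsD A s)

lemma clamp_mem (s : ℝ) : max 0 (min 1 s) ∈ Icc (0:ℝ) 1 :=
  ⟨le_max_left _ _, max_le zero_le_one (min_le_left _ _)⟩

lemma abar_eq {s : ℝ} (hs : s ∈ Icc (0:ℝ) 1) : abar A s = A s := by
  rw [abar, min_eq_right hs.2, max_eq_right hs.1]

lemma abar_continuous (hA : IsPickands A) : Continuous (abar A) := by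
  refine (continuousOn hA).comp_continuous ?_ clamp_mem
  exact continuous_const.max (continuous_const.min continuous_id)

lemma abar_bounds (hA : IsPickands A) (s : ℝ) : 1/2 ≤ abar A s ∧ abar A s ≤ 1 :=
  ⟨half_le hA (clamp_mem s), le_one hA (clamp_mem s)⟩

lemma hbar_measurable (hA : IsPickands A) : Measurable (hbar A) := by
  have h1 : Measurable (abar A) := (abar_continuous hA).measurable
  have h2 : Measurable (pickandsD A) := (pickandsD_mono hA).measurable
  exact (((measurable_const.sub (measurable_const.mul measurable_id)).mul h1).sub
    ((measurable_id.mul (measurable_const.sub measurable_id)).mul h2)).div (h1.pow_const 2)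

lemma gker_measurable (hA : IsPickands A) : Measurable (gker A) :=
  (hbar_measurable hA).mul (measurable_const.sub (pickandsD_mono hA).measurable)

lemma hbar_abs_le (hA : IsPickands A) {s : ℝ} (hs : s ∈ Icc (0:ℝ) 1) : |hbar A s| ≤ 8 := by
  obtain ⟨ha1, ha2⟩ := abar_bounds hA s
  have hd1 := neg_one_le_pickandsD hA s
  have hd2 := pickandsD_le_one hA s
  have e1 : |1 - 2*s| ≤ 1 := by rw [abs_le]; constructor <;> [linarith [hs.2]; linarith [hs.1]]
  have e2 : |abar A s| ≤ 1 := by rw [abs_of_pos (by linarith)]; exact ha2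
  have e3 : |s * (1-s)| ≤ 1 := by
    rw [abs_of_nonneg (by nlinarith [hs.1, hs.2])]; nlinarith [hs.1, hs.2]
  have e4 : |pickandsD A s| ≤ 1 := abs_le.2 ⟨hd1, hd2⟩
  have hnum : |(1 - 2*s) * abar A s - s * (1 - s) * pickandsD A s| ≤ 2 := by
    have t1 : |(1 - 2*s) * abar A s| ≤ 1 := by
      rw [abs_mul]; exact mul_le_one₀ e1 (abs_nonneg _) e2
    have t2 : |s * (1 - s) * pickandsD A s| ≤ 1 := by
      rw [abs_mul]; exact mul_le_one₀ e3 (abs_nonneg _) e4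
    have t3 : |(1 - 2*s) * abar A s - s * (1 - s) * pickandsD A s| ≤
        |(1 - 2*s) * abar A s| + |s * (1 - s) * pickandsD A s| := by
      rw [sub_eq_add_neg]
      exact (abs_add_le _ _).trans (by rw [abs_neg])
    linarith
  rw [hbar, abs_div, abs_of_pos (by positivity : (0:ℝ) < (abar A s)^2),
    div_le_iff₀ (by positivity)]
  nlinarith
lemma gker_abs_le (hA : IsPickands A) {s : ℝ} (hs : s ∈ Icc (0:ℝ) 1) : |gker A s| ≤ 16 := by
  have h1 := hbar_abs_le hA hs
  have hd1 := neg_one_le_pickandsD hA s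
  have hd2 := pickandsD_le_one hA s
  rw [gker, abs_mul]
  have : |1 - pickandsD A s| ≤ 2 := by rw [abs_le]; constructor <;> linarith
  nlinarith [abs_nonneg (hbar A s)]

lemma hbar_intervalIntegrable (hA : IsPickands A) {t : ℝ} (ht : t ∈ Icc (0:ℝ) 1) :
    IntervalIntegrable (hbar A) volume 0 t := by
  rw [intervalIntegrable_iff, uIoc_of_le ht.1]
  refine Measure.integrableOn_of_bounded (M := 8) ?_ ?_ ?_
  · simp [Real.volume_Ioc]
  · exact (hbar_measurable hA).aestronglyMeasurable
  · filter_upwards [ae_restrict_mem measurableSet_Ioc] with s hs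
    rw [Real.norm_eq_abs]
    exact hbar_abs_le hA ⟨hs.1.le, hs.2.trans ht.2⟩

lemma ftc (hA : IsPickands A) {t : ℝ} (ht : t ∈ Icc (0:ℝ) 1) :
    ∫ s in (0:ℝ)..t, hbar A s = t * (1 - t) / A t := by
  have hcont : ContinuousOn (fun u => u * (1 - u) / A u) (Icc 0 t) := by
    refine ContinuousOn.div ?_ ((continuousOn hA).mono (Icc_subset_Icc le_rfl ht.2)) ?_
    · exact (continuous_id.mul (continuous_const.sub continuous_id)).continuousOn
    · exact fun u hu => (pos hA ⟨hu.1, hu.2.trans ht.2⟩).ne'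
  have hderiv : ∀ x ∈ Ioo 0 t,
      HasDerivWithinAt (fun u => u * (1 - u) / A u) (hbar A x) (Ioi x) x := by
    intro x hx
    have hxI : x ∈ Icc (0:ℝ) 1 := ⟨hx.1.le, (hx.2.trans_le ht.2).le⟩
    have hxIco : x ∈ Ico (0:ℝ) 1 := ⟨hx.1.le, hx.2.trans_le ht.2⟩
    have hg : HasDerivWithinAt (fun u => u * (1 - u)) (1 - 2*x) (Ioi x) x := by
      have h := ((hasDerivAt_id x).mul ((hasDerivAt_const x (1:ℝ)).sub (hasDerivAt_id x)))
      simp only [id, Pi.mul_def, Pi.sub_def] at h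
      exact h.hasDerivWithinAt.congr_deriv (by ring)
    have hd := hg.div (hasDerivWithinAt_pickandsD hA hxIco) (pos hA hxI).ne'
    have : ((1 - 2*x) * A x - x * (1 - x) * pickandsD A x) / (A x) ^ 2 = hbar A x := by
      rw [hbar, abar_eq hxI]
    rw [← this]
    exact hd
  have := intervalIntegral.integral_eq_sub_of_hasDeriv_right_of_le ht.1 hcont hderiv
    (hbar_intervalIntegrable hA ht)
  rw [this, A_zero hA]
  norm_num

lemma stj_coe (hA : IsPickands A) :
    ⇑((pickandsD_mono hA).stieltjesFunction) = Function.rightLim (pickandsD A) := rfl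

lemma stj_one (hA : IsPickands A) : (pickandsD_mono hA).stieltjesFunction 1 = 1 := by
  rw [Monotone.stieltjesFunction_eq]
  refine rightLim_eq_of_tendsto ?_
  refine Tendsto.congr' ?_ tendsto_const_nhds
  filter_upwards [self_mem_nhdsWithin] with y (hy : y ∈ Ioi (1:ℝ))
  exact (pickandsD_of_one_le hy.le).symm

lemma stj_leftLim (hA : IsPickands A) {s : ℝ} (hc : ContinuousAt (pickandsD A) s) :
    Function.leftLim (⇑((pickandsD_mono hA).stieltjesFunction)) s = pickandsD A s := by
  have hmono := pickandsD_mono hA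
  rw [stj_coe hA]
  refine leftLim_eq_of_tendsto ?_
  have hlow : Tendsto (pickandsD A) (𝓝[<] s) (𝓝 (pickandsD A s)) :=
    hc.tendsto.mono_left nhdsWithin_le_nhds
  have hup : Tendsto (fun r => pickandsD A ((r + s)/2)) (𝓝[<] s) (𝓝 (pickandsD A s)) := by
    refine hc.tendsto.comp ?_
    have h2 : Tendsto (fun r : ℝ => (r + s)/2) (𝓝 s) (𝓝 ((s + s)/2)) :=
      ((continuous_id.add continuous_const).div_const 2).tendsto s
    rw [show (s + s)/2 = s by ring] at h2
    exact h2.mono_left nhdsWithin_le_nhds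
  refine tendsto_of_tendsto_of_tendsto_of_le_of_le' hlow hup ?_ ?_
  · exact Eventually.of_forall fun r => hmono.le_rightLim le_rfl
  · filter_upwards [self_mem_nhdsWithin] with r (hr : r < s)
    exact hmono.rightLim_le (by linarith)

lemma tau_formula (hA : IsPickands A) :
    kendallTau A = ∫ s in Ioc (0:ℝ) 1, gker A s := by
  have hmono := pickandsD_mono hA
  have hμIcc : (hmono.stieltjesFunction).measure (Icc 0 1) ≠ ⊤ := by
    rw [StieltjesFunction.measure_Icc]; exact ENNReal.ofReal_ne_top
  haveI hfin : IsFiniteMeasure ((hmono.stieltjesFunction).measure.restrict (Icc 0 1)) :=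
    ⟨by rwa [Measure.restrict_apply_univ, lt_top_iff_ne_top]⟩
  haveI hfin2 : IsFiniteMeasure (volume.restrict (Ioc (0:ℝ) 1)) :=
    ⟨by rw [Measure.restrict_apply_univ]; simp [Real.volume_Ioc]⟩
  rw [kendallTau, dif_pos hmono]
  have hstep1 : EqOn (fun t : ℝ => t * (1 - t) / A t)
      (fun t : ℝ => ∫ s in Ioc (0:ℝ) 1, (Iic t).indicator (hbar A) s) (Icc 0 1) := by
    intro t ht
    have hset : Ioc (0:ℝ) 1 ∩ Iic t = Ioc 0 t := by
      ext u
      simp only [mem_inter_iff, mem_Ioc, mem_Iic]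
      exact ⟨fun h => ⟨h.1.1, h.2⟩, fun h => ⟨⟨h.1, h.2.trans ht.2⟩, h.2⟩⟩
    simp only
    rw [setIntegral_indicator measurableSet_Iic, hset,
      ← intervalIntegral.integral_of_le ht.1, ftc hA ht]
  rw [setIntegral_congr_fun measurableSet_Icc hstep1]
  have hFmeas : AEStronglyMeasurable
      (Function.uncurry (fun t s => (Iic t).indicator (hbar A) s))
      (((hmono.stieltjesFunction).measure.restrict (Icc 0 1)).prod
        (volume.restrict (Ioc 0 1))) := by
    have hunc : Function.uncurry (fun t s => (Iic t).indicator (hbar A) s) =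
        ({q : ℝ × ℝ | q.2 ≤ q.1}.indicator (fun q => hbar A q.2)) := by
      funext p
      rcases p with ⟨t, s⟩
      by_cases h : s ≤ t <;> simp [Function.uncurry, Set.indicator, h]
    rw [hunc]
    exact (((hbar_measurable hA).comp measurable_snd).indicator
      (measurableSet_le measurable_snd measurable_fst)).aestronglyMeasurable
  have hFbdd : ∀ᵐ p ∂(((hmono.stieltjesFunction).measure.restrict (Icc 0 1)).prod
      (volume.restrict (Ioc 0 1))),
      ‖Function.uncurry (fun t s => (Iic t).indicator (hbar A) s) p‖ ≤ 8 := by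
    rw [Measure.prod_restrict]
    filter_upwards [ae_restrict_mem (measurableSet_Icc.prod measurableSet_Ioc)] with p hp
    have hp2 : p.2 ∈ Icc (0:ℝ) 1 := ⟨hp.2.1.le, hp.2.2⟩
    rcases p with ⟨t, s⟩
    simp only [Function.uncurry_apply_pair, Set.indicator_apply, mem_Iic, Real.norm_eq_abs]
    by_cases h : s ≤ t
    · rw [if_pos h]
      exact hbar_abs_le hA hp2
    · rw [if_neg h, abs_zero]
      norm_num
  have hFint : Integrable (Function.uncurry (fun t s => (Iic t).indicator (hbar A) s))
      (((hmono.stieltjesFunction).measure.restrict (Icc 0 1)).prod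
        (volume.restrict (Ioc 0 1))) :=
    Integrable.mono' (integrable_const 8) hFmeas hFbdd
  rw [MeasureTheory.integral_integral_swap hFint]
  refine integral_congr_ae ?_
  have hbad : ∀ᵐ s ∂(volume.restrict (Ioc (0:ℝ) 1)),
      ContinuousAt (pickandsD A) s ∧ s ≠ 1 := by
    refine ae_restrict_of_ae ?_
    have hcnt : ({x | ¬ContinuousAt (pickandsD A) x} ∪ {1} : Set ℝ).Countable :=
      hmono.countable_not_continuousAt.union (countable_singleton 1)
    refine ae_iff.2 (measure_mono_null ?_ (hcnt.measure_zero volume))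
    intro s hs
    simp only [mem_setOf_eq, not_and_or, not_not] at hs
    rcases hs with h | h
    · exact Or.inl h
    · exact Or.inr (by simpa using not_not.mp (by simpa using h))
  filter_upwards [ae_restrict_mem measurableSet_Ioc, hbad] with s hs hgood
  obtain ⟨hcont, hne1⟩ := hgood
  have hind : (fun t : ℝ => (Iic t).indicator (hbar A) s) =
      fun t : ℝ => (Ici s).indicator (fun _ => hbar A s) t := by
    funext t
    simp only [Set.indicator_apply, mem_Iic, mem_Ici]
  have hset2 : Ici s ∩ Icc (0:ℝ) 1 = Icc s 1 := by
    ext u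
    simp only [mem_inter_iff, mem_Ici, mem_Icc]
    exact ⟨fun h => ⟨h.1, h.2.2⟩, fun h => ⟨h.1, ⟨hs.1.le.trans h.1, h.2⟩⟩⟩
  calc ∫ t in Icc (0:ℝ) 1, (Iic t).indicator (hbar A) s ∂(hmono.stieltjesFunction).measure
      = ∫ t in Icc (0:ℝ) 1, (Ici s).indicator (fun _ => hbar A s) t
          ∂(hmono.stieltjesFunction).measure := by rw [hind]
    _ = ∫ t in Ici s, (fun _ => hbar A s) t
          ∂((hmono.stieltjesFunction).measure.restrict (Icc 0 1)) :=
        integral_indicator measurableSet_Ici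
    _ = ((hmono.stieltjesFunction).measure (Icc s 1)).toReal • hbar A s := by
        rw [Measure.restrict_restrict measurableSet_Ici, hset2, setIntegral_const, measureReal_def]
    _ = gker A s := by
        rw [StieltjesFunction.measure_Icc, stj_one hA, stj_leftLim hA hcont,
          ENNReal.toReal_ofReal (by linarith [pickandsD_le_one hA s]), smul_eq_mul,
          gker, mul_comm]

lemma slope_tendsto {A : ℕ → ℝ → ℝ} {B : ℝ → ℝ}
    (hconv : TendstoUniformlyOn A B Filter.atTop (Set.Icc (0 : ℝ) 1))
    {x y : ℝ} (hx : x ∈ Icc (0:ℝ) 1) (hy : y ∈ Icc (0:ℝ) 1) :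
    Tendsto (fun n => slope (A n) x y) atTop (𝓝 (slope B x y)) := by
  simp only [slope_eq]
  exact ((hconv.tendsto_at hy).sub (hconv.tendsto_at hx)).div_const _

lemma pickandsD_tendsto {A : ℕ → ℝ → ℝ} {B : ℝ → ℝ}
    (hA : ∀ n, IsPickands (A n)) (hB : IsPickands B)
    (hconv : TendstoUniformlyOn A B Filter.atTop (Set.Icc (0 : ℝ) 1))
    {s : ℝ} (hs : s ∈ Ioo (0:ℝ) 1) (hc : ContinuousAt (pickandsD B) s) :
    Tendsto (fun n => pickandsD (A n) s) atTop (𝓝 (pickandsD B s)) := by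
  have hsI : s ∈ Icc (0:ℝ) 1 := ⟨hs.1.le, hs.2.le⟩
  have hsIco : s ∈ Ico (0:ℝ) 1 := ⟨hs.1.le, hs.2⟩
  refine tendsto_order.2 ⟨fun l hl => ?_, fun u hu => ?_⟩
  · -- eventually l < pickandsD (A n) s
    have hlt : Tendsto (pickandsD B) (𝓝[<] s) (𝓝 (pickandsD B s)) :=
      hc.tendsto.mono_left nhdsWithin_le_nhds
    obtain ⟨r, hrD, hr0, hrs⟩ : ∃ r, l < pickandsD B r ∧ 0 < r ∧ r < s :=
      (((hlt.eventually_const_lt hl).and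
        (Ioo_mem_nhdsLT_of_mem (⟨hs.1, le_rfl⟩ : s ∈ Ioc 0 s))).mono
          (fun r h => ⟨h.1, h.2.1, h.2.2⟩)).exists
    have hrI : r ∈ Icc (0:ℝ) 1 := ⟨hr0.le, (hrs.trans hs.2).le⟩
    have hrIco : r ∈ Ico (0:ℝ) 1 := ⟨hr0.le, hrs.trans hs.2⟩
    have h1 : pickandsD B r ≤ slope B r s := pickandsD_le_slope hB hrIco hsI hrs
    have h2 := slope_tendsto hconv hrI hsI
    have h3 : ∀ n, slope (A n) r s ≤ pickandsD (A n) s := fun n =>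
      slope_le_pickandsD (hA n) hrI hsIco hrs
    filter_upwards [h2.eventually_const_lt (lt_of_lt_of_le hrD h1)] with n hn
    exact lt_of_lt_of_le hn (h3 n)
  · -- eventually pickandsD (A n) s < u
    obtain ⟨y, hyu, hsy, hy1⟩ : ∃ y, slope B s y < u ∧ s < y ∧ y < 1 :=
      ((((tendsto_slope_pickandsD hB hsIco).eventually_lt_const hu).and
        (Ioo_mem_nhdsGT_of_mem (⟨le_rfl, hs.2⟩ : s ∈ Ico s 1))).mono
          (fun y h => ⟨h.1, h.2.1, h.2.2⟩)).exists
    have hyI : y ∈ Icc (0:ℝ) 1 := ⟨(hs.1.trans hsy).le, hy1.le⟩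
    have h2 := slope_tendsto hconv hsI hyI
    have h3 : ∀ n, pickandsD (A n) s ≤ slope (A n) s y := fun n =>
      pickandsD_le_slope (hA n) hsIco hyI hsy
    filter_upwards [h2.eventually_lt_const hyu] with n hn
    exact lt_of_le_of_lt (h3 n) hn

lemma gker_tendsto {A : ℕ → ℝ → ℝ} {B : ℝ → ℝ}
    (hA : ∀ n, IsPickands (A n)) (hB : IsPickands B)
    (hconv : TendstoUniformlyOn A B Filter.atTop (Set.Icc (0 : ℝ) 1))
    {s : ℝ} (hs : s ∈ Ioo (0:ℝ) 1) (hc : ContinuousAt (pickandsD B) s) :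
    Tendsto (fun n => gker (A n) s) atTop (𝓝 (gker B s)) := by
  have hsI : s ∈ Icc (0:ℝ) 1 := ⟨hs.1.le, hs.2.le⟩
  have hAt : Tendsto (fun n => A n s) atTop (𝓝 (B s)) := hconv.tendsto_at hsI
  have hD := pickandsD_tendsto hA hB hconv hs hc
  have habar : Tendsto (fun n => abar (A n) s) atTop (𝓝 (abar B s)) := by
    simp only [abar_eq hsI]
    exact hAt
  have hden : (abar B s) ^ 2 ≠ 0 :=
    pow_ne_zero _ (by have := (abar_bounds hB s).1; positivity)
  simp only [gker, hbar]
  exact ((((tendsto_const_nhds.mul habar).sub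
    (tendsto_const_nhds.mul hD)).div (habar.pow 2) hden).mul
    (tendsto_const_nhds.sub hD))

end PK

/-- `τ` and `ρ` are continuous with respect to uniform convergence on
`[0,1]`: if a sequence of Pickands dependence functions converges uniformly on `[0,1]`
to a Pickands dependence function, then the corresponding values of Kendall's tau and
Spearman's rho converge. -/
theorem tau_rho_continuous (A : ℕ → ℝ → ℝ) (B : ℝ → ℝ)
    (hA : ∀ n, IsPickands (A n)) (hB : IsPickands B)
    (hconv : TendstoUniformlyOn A B Filter.atTop (Set.Icc (0 : ℝ) 1)) :
    Filter.Tendsto (fun n => kendallTau (A n)) Filter.atTop (nhds (kendallTau B)) ∧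
      Filter.Tendsto (fun n => spearmanRho (A n)) Filter.atTop (nhds (spearmanRho B)) := by
  haveI hfin2 : IsFiniteMeasure (volume.restrict (Ioc (0:ℝ) 1)) :=
    ⟨by rw [Measure.restrict_apply_univ]; simp [Real.volume_Ioc]⟩
  have hgood : ∀ᵐ s ∂(volume.restrict (Ioc (0:ℝ) 1)),
      ContinuousAt (pickandsD B) s ∧ s ≠ 1 := by
    refine ae_restrict_of_ae ?_
    have hcnt : ({x | ¬ContinuousAt (pickandsD B) x} ∪ {1} : Set ℝ).Countable :=
      (PK.pickandsD_mono hB).countable_not_continuousAt.union (countable_singleton 1)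
    refine ae_iff.2 (measure_mono_null ?_ (hcnt.measure_zero volume))
    intro s hs
    simp only [mem_setOf_eq, not_and_or, not_not] at hs
    rcases hs with h | h
    · exact Or.inl h
    · exact Or.inr (by simpa using not_not.mp (by simpa using h))
  constructor
  · -- Kendall's tau
    have hrw : (fun n => kendallTau (A n)) =
        fun n => ∫ s in Ioc (0:ℝ) 1, PK.gker (A n) s :=
      funext fun n => PK.tau_formula (hA n)
    rw [hrw, PK.tau_formula hB]
    refine tendsto_integral_of_dominated_convergence (fun _ => (16:ℝ))
      (fun n => (PK.gker_measurable (hA n)).aestronglyMeasurable)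
      (integrable_const 16) (fun n => ?_) ?_
    · filter_upwards [ae_restrict_mem measurableSet_Ioc] with s hs
      rw [Real.norm_eq_abs]
      exact PK.gker_abs_le (hA n) ⟨hs.1.le, hs.2⟩
    · filter_upwards [ae_restrict_mem measurableSet_Ioc, hgood] with s hs hg
      exact PK.gker_tendsto hA hB hconv ⟨hs.1, lt_of_le_of_ne hs.2 hg.2⟩ hg.1
  · -- Spearman's rho
    have key : Tendsto (fun n => ∫ t in (0:ℝ)..1, 1 / (1 + A n t) ^ 2) atTop
        (𝓝 (∫ t in (0:ℝ)..1, 1 / (1 + B t) ^ 2)) := by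
      have hiv : ∀ C : ℝ → ℝ, (∫ t in (0:ℝ)..1, 1 / (1 + C t) ^ 2)
          = ∫ t in Ioc (0:ℝ) 1, 1 / (1 + C t) ^ 2 := fun C =>
        intervalIntegral.integral_of_le zero_le_one
    -- rewrite via abar to get measurability
      have hrw : ∀ (C : ℝ → ℝ), IsPickands C → (∫ t in Ioc (0:ℝ) 1, 1 / (1 + C t) ^ 2)
          = ∫ t in Ioc (0:ℝ) 1, 1 / (1 + PK.abar C t) ^ 2 := by
        intro C hC
        refine setIntegral_congr_fun measurableSet_Ioc fun t ht => ?_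
        rw [PK.abar_eq ⟨ht.1.le, ht.2⟩]
      simp only [hiv]
      rw [hrw B hB]
      have hrw2 : (fun n => ∫ t in Ioc (0:ℝ) 1, 1 / (1 + A n t) ^ 2) =
          fun n => ∫ t in Ioc (0:ℝ) 1, 1 / (1 + PK.abar (A n) t) ^ 2 :=
        funext fun n => hrw (A n) (hA n)
      rw [hrw2]
      refine tendsto_integral_of_dominated_convergence (fun _ => (1:ℝ))
        (fun n => ?_) (integrable_const 1) (fun n => ?_) ?_
      · have hc : Continuous fun t => 1 / (1 + PK.abar (A n) t) ^ 2 := by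
          refine continuous_const.div ((continuous_const.add
            (PK.abar_continuous (hA n))).pow 2) fun t => ?_
          have := (PK.abar_bounds (hA n) t).1
          positivity
        exact hc.aestronglyMeasurable
      · refine Eventually.of_forall fun t => ?_
        have h1 := (PK.abar_bounds (hA n) t).1
        rw [Real.norm_eq_abs, abs_of_pos (by positivity)]
        rw [div_le_one (by positivity)]
        nlinarith
      · filter_upwards [ae_restrict_mem measurableSet_Ioc] with t ht
        have htI : t ∈ Icc (0:ℝ) 1 := ⟨ht.1.le, ht.2⟩
        have hAt : Tendsto (fun n => PK.abar (A n) t) atTop (𝓝 (PK.abar B t)) := by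
          simp only [PK.abar_eq htI]
          exact hconv.tendsto_at htI
        have hden : (1 + PK.abar B t) ^ 2 ≠ 0 := by
          have := (PK.abar_bounds hB t).1
          positivity
        exact tendsto_const_nhds.div ((tendsto_const_nhds.add hAt).pow 2) hden
    simp only [spearmanRho]
    exact (key.const_mul 12).sub_const 3
end
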